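/- arXiv:1911.05918 — 7 statements merged into one kernel-verified Lean document; each statement's English description precedes it below -/
import Mathlib

section
/- In the multi-fork model for K parallel tasks with shifted exponential service (shift c, rate μ) and inter-forking gaps at least c, the mean makespan satisfies E[S] = c + (1/μ) ∑_{k=1}^{K} (1/k) ( 1/N_m + ∑_{i=1}^{m} (n_i / (N_i N_{i-1})) (1 - e^{-μτ_i})^k ). -/
open MeasureTheory Set

/-- Auxiliary definition: partial sums of batch sizes. -/
noncomputable def mfNp (n : ℕ → ℕ) (i : ℕ) : ℝ := ∑ ℓ ∈ Finset.range i, (n ℓ : ℝ)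

/-- Auxiliary definition: the `τ_i` quantities. -/
noncomputable def mfTau (t : ℕ → ℝ) (n : ℕ → ℕ) (i : ℕ) : ℝ :=
  ∑ ℓ ∈ Finset.range (i + 1), (n ℓ : ℝ) * (t i - t ℓ)

/-- Auxiliary definition: `W_i = ∑_{k=1}^K (1 - e^{-μ τ_i})^k / k`. -/
noncomputable def mfW (K : ℕ) (μ : ℝ) (t : ℕ → ℝ) (n : ℕ → ℕ) (i : ℕ) : ℝ :=
  ∑ k ∈ Finset.Icc 1 K, (1 - Real.exp (-(μ * mfTau t n i))) ^ k / (k : ℝ)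

/-- Auxiliary definition: the integrand, written with `max` so that it is visibly continuous. -/
noncomputable def mfF (m K : ℕ) (c μ : ℝ) (t : ℕ → ℝ) (n : ℕ → ℕ) (u : ℝ) : ℝ :=
  1 - (1 - Real.exp (-(μ * ∑ ℓ ∈ Finset.range (m + 1),
      (n ℓ : ℝ) * max (u - t ℓ - c) 0))) ^ K

/-- The key antiderivative computation. -/
lemma mf_hasDerivAt (K : ℕ) (A C : ℝ) (hA : A ≠ 0) (x : ℝ) :
    HasDerivAt (fun u => (1 / A) * ∑ k ∈ Finset.Icc 1 K,
        (1 - Real.exp (-(A * u + C))) ^ k / (k : ℝ))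
      (1 - (1 - Real.exp (-(A * x + C))) ^ K) x := by
  set e := Real.exp (-(A * x + C)) with he
  have h1 : HasDerivAt (fun u : ℝ => -(A * u + C)) (-A) x := by
    have h := (((hasDerivAt_id x).const_mul A).add_const C).neg
    refine h.congr_deriv (Eq.symm ?_)
    simp
  have hg : HasDerivAt (fun u : ℝ => Real.exp (-(A * u + C))) (-A * e) x := by
    have h := h1.exp
    convert h using 1
    rw [he]
    ring
  have hsum : HasDerivAt (fun u => ∑ k ∈ Finset.Icc 1 K,
      (1 - Real.exp (-(A * u + C))) ^ k / (k : ℝ))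
      (∑ k ∈ Finset.Icc 1 K, ((k : ℝ) * (1 - e) ^ (k - 1) * (A * e)) / (k : ℝ)) x := by
    apply HasDerivAt.fun_sum
    intro k _
    have h2 : HasDerivAt (fun u : ℝ => 1 - Real.exp (-(A * u + C))) (A * e) x := by
      have h := hg.const_sub 1
      refine h.congr_deriv (Eq.symm ?_)
      ring
    exact (h2.pow k).div_const (k : ℝ)
  have H := hsum.const_mul (1 / A)
  refine H.congr_deriv (Eq.symm ?_)
  have hsimp : ∑ k ∈ Finset.Icc 1 K, ((k : ℝ) * (1 - e) ^ (k - 1) * (A * e)) / (k : ℝ)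
      = (A * e) * ∑ j ∈ Finset.range K, (1 - e) ^ j := by
    rw [Finset.mul_sum, ← Finset.Ico_add_one_right_eq_Icc, Finset.sum_Ico_eq_sum_range]
    refine Finset.sum_congr (by norm_num) fun j _ => ?_
    have hk0 : ((1 + j : ℕ) : ℝ) ≠ 0 := by positivity
    have : (1 + j) - 1 = j := by omega
    rw [this]
    field_simp
  rw [hsimp]
  have h1A : (1 / A) * ((A * e) * ∑ j ∈ Finset.range K, (1 - e) ^ j)
      = e * ∑ j ∈ Finset.range K, (1 - e) ^ j := by
    field_simp
  rw [h1A]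
  linear_combination geom_sum_mul (1 - e) K

/-- Multi-fork model for `K` parallel tasks, shifted exponential service (shift `c`, rate `μ`),
inter-forking gaps at least `c`. Each task's survival function is
`G u = exp (-μ ∑_{ℓ ≤ m, t ℓ + c ≤ u} n ℓ (u - t ℓ - c))` (which equals
`exp (-μ N_i (u - t_i - c) - μ τ_i)` on `[t_i + c, t_{i+1} + c)` and `1` for `u < c`).
The mean makespan `E S = ∫_0^∞ (1 - (1 - G u)^K) du` equals
`c + (1/μ) ∑_{k=1}^K (1/k) (1/N_m + ∑_{i=1}^m (n_i/(N_i N_{i-1})) (1 - e^{-μτ_i})^k)`. -/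
theorem mean_makespan_multifork (m K : ℕ) (hK : 1 ≤ K) (c μ : ℝ) (hc : 0 < c) (hμ : 0 < μ)
    (t : ℕ → ℝ) (n : ℕ → ℕ) (ht0 : t 0 = 0) (hgap : ∀ j < m, c ≤ t (j + 1) - t j)
    (hn0 : 0 < n 0) :
    ∫ u in Set.Ioi (0 : ℝ),
        (1 - (1 - Real.exp (-(μ * ∑ ℓ ∈
            (Finset.range (m + 1)).filter (fun ℓ => t ℓ + c ≤ u),
              (n ℓ : ℝ) * (u - t ℓ - c)))) ^ K)
      = c + (1 / μ) * ∑ k ∈ Finset.Icc 1 K, (1 / (k : ℝ)) *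
          (1 / (∑ ℓ ∈ Finset.range (m + 1), (n ℓ : ℝ))
            + ∑ i ∈ Finset.Icc 1 m,
                ((n i : ℝ) / ((∑ ℓ ∈ Finset.range (i + 1), (n ℓ : ℝ))
                    * (∑ ℓ ∈ Finset.range i, (n ℓ : ℝ))))
                  * (1 - Real.exp (-(μ * ∑ ℓ ∈ Finset.range (i + 1),
                      (n ℓ : ℝ) * (t i - t ℓ)))) ^ k) := by
  classical
  -- fold everything into the auxiliary definitions
  have hfil : ∀ u : ℝ, ∑ ℓ ∈ (Finset.range (m + 1)).filter (fun ℓ => t ℓ + c ≤ u),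
      (n ℓ : ℝ) * (u - t ℓ - c)
      = ∑ ℓ ∈ Finset.range (m + 1), (n ℓ : ℝ) * max (u - t ℓ - c) 0 := by
    intro u
    rw [Finset.sum_filter]
    refine Finset.sum_congr rfl fun ℓ _ => ?_
    split_ifs with h
    · rw [max_eq_left (by linarith)]
    · rw [max_eq_right (by linarith), mul_zero]
  simp only [hfil]
  have hFfold : ∀ u : ℝ, (1 - (1 - Real.exp (-(μ * ∑ ℓ ∈ Finset.range (m + 1),
      (n ℓ : ℝ) * max (u - t ℓ - c) 0))) ^ K) = mfF m K c μ t n u := fun u => rfl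
  have hNpfold : ∀ i : ℕ, (∑ ℓ ∈ Finset.range i, (n ℓ : ℝ)) = mfNp n i := fun i => rfl
  have hTfold : ∀ i : ℕ, (∑ ℓ ∈ Finset.range (i + 1), (n ℓ : ℝ) * (t i - t ℓ))
      = mfTau t n i := fun i => rfl
  simp only [hFfold, hNpfold, hTfold]
  -- basic facts
  have hKne : K ≠ 0 := by omega
  have hmono : ∀ a b : ℕ, a < b → b ≤ m → t a + c ≤ t b := by
    intro a b hab hbm
    induction b with
    | zero => omega
    | succ b ih =>
      rcases Nat.lt_succ_iff_lt_or_eq.mp hab with h | h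
      · have h1 := hgap b (by omega)
        have h2 := ih h (by omega)
        linarith
      · subst h
        have := hgap a (by omega)
        linarith
  have hmono_le : ∀ a b : ℕ, a ≤ b → b ≤ m → t a ≤ t b := by
    intro a b hab hbm
    rcases eq_or_lt_of_le hab with h | h
    · subst h; rfl
    · have := hmono a b h hbm; linarith
  have ht_nonneg : ∀ j : ℕ, j ≤ m → 0 ≤ t j := by
    intro j hj
    have := hmono_le 0 j (Nat.zero_le _) hj
    rw [ht0] at this
    exact this
  have hNp_pos : ∀ j : ℕ, 1 ≤ j → 0 < mfNp n j := by
    intro j hj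
    have h1 : (n 0 : ℝ) ≤ mfNp n j := by
      refine Finset.single_le_sum (f := fun ℓ => (n ℓ : ℝ)) (fun i _ => by positivity) ?_
      exact Finset.mem_range.mpr (by omega)
    have h2 : (0 : ℝ) < (n 0 : ℝ) := by exact_mod_cast hn0
    linarith
  have hτ_succ : ∀ i : ℕ, mfTau t n (i + 1) = mfNp n (i + 1) * (t (i + 1) - t i) + mfTau t n i := by
    intro i
    show ∑ ℓ ∈ Finset.range (i + 2), (n ℓ : ℝ) * (t (i + 1) - t ℓ) = _
    rw [Finset.sum_range_succ]
    simp only [sub_self, mul_zero, add_zero]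
    have h : ∀ ℓ ∈ Finset.range (i + 1), (n ℓ : ℝ) * (t (i + 1) - t ℓ)
        = (n ℓ : ℝ) * (t (i + 1) - t i) + (n ℓ : ℝ) * (t i - t ℓ) := fun ℓ _ => by ring
    rw [Finset.sum_congr rfl h, Finset.sum_add_distrib, ← Finset.sum_mul]
    rfl
  -- the piecewise form of the exponent
  have hS : ∀ i : ℕ, i ≤ m → ∀ x : ℝ, t i + c ≤ x → (∀ ℓ, i < ℓ → ℓ ≤ m → x ≤ t ℓ + c) →
      ∑ ℓ ∈ Finset.range (m + 1), (n ℓ : ℝ) * max (x - t ℓ - c) 0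
        = mfNp n (i + 1) * (x - (t i + c)) + mfTau t n i := by
    intro i him x hx1 hx2
    have hsplit : Finset.range (m + 1) = Finset.range (i + 1) ∪ Finset.Ico (i + 1) (m + 1) := by
      rw [Finset.range_eq_Ico, Finset.range_eq_Ico]
      exact (Finset.Ico_union_Ico_eq_Ico (by omega : (0:ℕ) ≤ i + 1) (by omega : i + 1 ≤ m + 1)).symm
    rw [hsplit, Finset.sum_union (by
      rw [Finset.range_eq_Ico]; exact Finset.Ico_disjoint_Ico_consecutive 0 (i + 1) (m + 1))]
    have h2 : ∑ ℓ ∈ Finset.Ico (i + 1) (m + 1), (n ℓ : ℝ) * max (x - t ℓ - c) 0 = 0 := by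
      apply Finset.sum_eq_zero
      intro ℓ hℓ
      rw [Finset.mem_Ico] at hℓ
      have := hx2 ℓ (by omega) (by omega)
      rw [max_eq_right (by linarith), mul_zero]
    rw [h2, add_zero]
    have h1 : ∀ ℓ ∈ Finset.range (i + 1), (n ℓ : ℝ) * max (x - t ℓ - c) 0
        = (n ℓ : ℝ) * (x - (t i + c)) + (n ℓ : ℝ) * (t i - t ℓ) := by
      intro ℓ hℓ
      rw [Finset.mem_range] at hℓ
      have htl : t ℓ ≤ t i := hmono_le ℓ i (by omega) him
      rw [max_eq_left (by linarith)]
      ring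
    rw [Finset.sum_congr rfl h1, Finset.sum_add_distrib, ← Finset.sum_mul]
    rfl
  -- continuity and nonnegativity of the integrand
  have hf_cont : Continuous (mfF m K c μ t n) := by
    unfold mfF
    refine (continuous_const.sub ?_)
    refine Continuous.pow (continuous_const.sub ?_) K
    refine Real.continuous_exp.comp (Continuous.neg ?_)
    refine continuous_const.mul ?_
    refine continuous_finset_sum _ fun ℓ _ => continuous_const.mul ?_
    exact (((continuous_id.sub continuous_const).sub continuous_const).max continuous_const)
  have hS_nonneg : ∀ x : ℝ, 0 ≤ ∑ ℓ ∈ Finset.range (m + 1), (n ℓ : ℝ) * max (x - t ℓ - c) 0 := by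
    intro x
    refine Finset.sum_nonneg fun ℓ _ => mul_nonneg (by positivity) (le_max_right _ 0)
  have hf_nonneg : ∀ x : ℝ, 0 ≤ mfF m K c μ t n x := by
    intro x
    unfold mfF
    set e := Real.exp (-(μ * ∑ ℓ ∈ Finset.range (m + 1), (n ℓ : ℝ) * max (x - t ℓ - c) 0))
    have he_pos : 0 < e := Real.exp_pos _
    have he_le : e ≤ 1 := by
      apply Real.exp_le_one_iff.mpr
      have := hS_nonneg x
      nlinarith [hμ.le]
    have h1 : (1 - e) ^ K ≤ 1 := by
      apply pow_le_one₀ (by linarith) (by linarith)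
    linarith
  -- the integral over each finite piece
  have hpiece : ∀ i, i < m → ∫ u in (t i + c)..(t (i + 1) + c), mfF m K c μ t n u
      = (1 / (μ * mfNp n (i + 1))) * (mfW K μ t n (i + 1) - mfW K μ t n i) := by
    intro i hi
    have hNpi := hNp_pos (i + 1) (by omega)
    set A := μ * mfNp n (i + 1) with hA_def
    have hA : 0 < A := mul_pos hμ hNpi
    set C := μ * mfTau t n i - A * (t i + c) with hC_def
    have hle : t i + c ≤ t (i + 1) + c := by
      have := hgap i hi; linarith
    have hderiv : ∀ x ∈ Set.uIcc (t i + c) (t (i + 1) + c),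
        HasDerivAt (fun u => (1 / A) * ∑ k ∈ Finset.Icc 1 K,
          (1 - Real.exp (-(A * u + C))) ^ k / (k : ℝ)) (mfF m K c μ t n x) x := by
      intro x hx
      rw [Set.uIcc_of_le hle] at hx
      have hfx : mfF m K c μ t n x = 1 - (1 - Real.exp (-(A * x + C))) ^ K := by
        unfold mfF
        rw [hS i (by omega) x hx.1 (fun ℓ hℓ1 hℓ2 => by
          have h1 : t (i + 1) ≤ t ℓ := hmono_le (i + 1) ℓ (by omega) hℓ2
          have := hx.2
          linarith)]
        rw [hC_def, hA_def]
        ring_nf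
      rw [hfx]
      exact mf_hasDerivAt K A C (ne_of_gt hA) x
    rw [intervalIntegral.integral_eq_sub_of_hasDerivAt hderiv
      (hf_cont.intervalIntegrable _ _)]
    have e1 : A * (t i + c) + C = μ * mfTau t n i := by rw [hC_def]; ring
    have e2 : A * (t (i + 1) + c) + C = μ * mfTau t n (i + 1) := by
      rw [hC_def, hτ_succ i]; ring
    rw [e1, e2]
    unfold mfW
    ring
  -- the tail integral
  have htail : IntegrableOn (mfF m K c μ t n) (Set.Ioi (t m + c)) volume ∧
      ∫ u in Set.Ioi (t m + c), mfF m K c μ t n u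
        = (1 / (μ * mfNp n (m + 1))) * ((∑ k ∈ Finset.Icc 1 K, 1 / (k : ℝ)) - mfW K μ t n m) := by
    have hNpm := hNp_pos (m + 1) (by omega)
    set A := μ * mfNp n (m + 1) with hA_def
    have hA : 0 < A := mul_pos hμ hNpm
    set C := μ * mfTau t n m - A * (t m + c) with hC_def
    set g : ℝ → ℝ := fun u => (1 / A) * ∑ k ∈ Finset.Icc 1 K,
      (1 - Real.exp (-(A * u + C))) ^ k / (k : ℝ) with hg_def
    have hderiv : ∀ x ∈ Set.Ici (t m + c), HasDerivAt g (mfF m K c μ t n x) x := by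
      intro x hx
      have hfx : mfF m K c μ t n x = 1 - (1 - Real.exp (-(A * x + C))) ^ K := by
        unfold mfF
        rw [hS m le_rfl x hx (fun ℓ hℓ1 hℓ2 => by omega)]
        rw [hC_def, hA_def]
        ring_nf
      rw [hfx]
      exact mf_hasDerivAt K A C (ne_of_gt hA) x
    have hexp : Filter.Tendsto (fun u : ℝ => Real.exp (-(A * u + C)))
        Filter.atTop (nhds 0) := by
      apply Real.tendsto_exp_atBot.comp
      have h1 : Filter.Tendsto (fun u : ℝ => A * u + C) Filter.atTop Filter.atTop := by
        apply Filter.tendsto_atTop_add_const_right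
        exact Filter.Tendsto.const_mul_atTop hA Filter.tendsto_id
      exact Filter.tendsto_neg_atBot_iff.mpr h1
    have hφ : Continuous (fun y : ℝ => (1 / A) * ∑ k ∈ Finset.Icc 1 K,
        (1 - y) ^ k / (k : ℝ)) := by
      refine continuous_const.mul (continuous_finset_sum _ fun k _ => ?_)
      exact ((continuous_const.sub continuous_id).pow k).div_const _
    have htend : Filter.Tendsto g Filter.atTop
        (nhds ((1 / A) * ∑ k ∈ Finset.Icc 1 K, 1 / (k : ℝ))) := by
      have h2 := (hφ.tendsto 0).comp hexp
      have h3 : Filter.Tendsto g Filter.atTop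
          (nhds ((1 / A) * ∑ k ∈ Finset.Icc 1 K, (1 - (0 : ℝ)) ^ k / (k : ℝ))) := h2
      simpa using h3
    constructor
    · exact integrableOn_Ioi_deriv_of_nonneg' hderiv
        (fun x _ => hf_nonneg x) htend
    · rw [integral_Ioi_of_hasDerivAt_of_nonneg' hderiv (fun x _ => hf_nonneg x) htend]
      have e1 : A * (t m + c) + C = μ * mfTau t n m := by rw [hC_def]; ring
      rw [hg_def]
      simp only [e1]
      unfold mfW
      ring
  -- the integral over (0, c]
  have hbase : ∫ u in Set.Ioc (0 : ℝ) c, mfF m K c μ t n u = c := by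
    have heq : ∀ u ∈ Set.Ioc (0 : ℝ) c, mfF m K c μ t n u = 1 := by
      intro u hu
      have hSz : ∑ ℓ ∈ Finset.range (m + 1), (n ℓ : ℝ) * max (u - t ℓ - c) 0 = 0 := by
        apply Finset.sum_eq_zero
        intro ℓ hℓ
        rw [Finset.mem_range] at hℓ
        have h0 : 0 ≤ t ℓ := ht_nonneg ℓ (by omega)
        rw [max_eq_right (by linarith [hu.2]), mul_zero]
      unfold mfF
      rw [hSz]
      simp [zero_pow hKne]
    rw [setIntegral_congr_fun measurableSet_Ioc heq]
    simp [Real.volume_Ioc, hc.le]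
  -- the middle integral, by induction
  have hmid : ∀ i, i ≤ m → ∫ u in (c)..(t i + c), mfF m K c μ t n u
      = (∑ j ∈ Finset.Icc 1 i, ((n j : ℝ) / (μ * (mfNp n (j + 1) * mfNp n j))) * mfW K μ t n j)
        + (1 / (μ * mfNp n (i + 1))) * mfW K μ t n i := by
    intro i
    induction i with
    | zero =>
      intro _
      rw [ht0, zero_add, intervalIntegral.integral_same]
      have hτ0 : mfTau t n 0 = 0 := by
        show ∑ ℓ ∈ Finset.range 1, (n ℓ : ℝ) * (t 0 - t ℓ) = 0
        simp
      have hW0 : mfW K μ t n 0 = 0 := by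
        unfold mfW
        rw [hτ0]
        apply Finset.sum_eq_zero
        intro k hk
        rw [Finset.mem_Icc] at hk
        simp [zero_pow (by omega : k ≠ 0)]
      simp [hW0]
    | succ i ih =>
      intro hi1
      have hi : i < m := by omega
      rw [← intervalIntegral.integral_add_adjacent_intervals
        (hf_cont.intervalIntegrable c (t i + c))
        (hf_cont.intervalIntegrable (t i + c) (t (i + 1) + c)),
        ih (by omega), hpiece i hi]
      rw [Finset.sum_Icc_succ_top (by omega : 1 ≤ i + 1)]
      have h1 : 0 < mfNp n (i + 1) := hNp_pos _ (by omega)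
      have h2 : 0 < mfNp n (i + 2) := hNp_pos _ (by omega)
      have hNs : mfNp n (i + 2) = mfNp n (i + 1) + (n (i + 1) : ℝ) := by
        show ∑ ℓ ∈ Finset.range (i + 2), (n ℓ : ℝ) = _
        rw [Finset.sum_range_succ]
        rfl
      rw [hNs]
      field_simp
      ring
  -- assemble
  have htm0 : (0 : ℝ) ≤ t m := ht_nonneg m le_rfl
  have hctm : c ≤ t m + c := by linarith
  have i1 : IntegrableOn (mfF m K c μ t n) (Set.Ioc (0 : ℝ) c) volume :=
    hf_cont.integrableOn_Ioc
  have i2 : IntegrableOn (mfF m K c μ t n) (Set.Ioc c (t m + c)) volume :=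
    hf_cont.integrableOn_Ioc
  have i3 := htail.1
  have hsplit1 : ∫ u in Set.Ioi (0 : ℝ), mfF m K c μ t n u
      = (∫ u in Set.Ioc (0 : ℝ) (t m + c), mfF m K c μ t n u)
        + ∫ u in Set.Ioi (t m + c), mfF m K c μ t n u := by
    rw [← Set.Ioc_union_Ioi_eq_Ioi (by linarith : (0 : ℝ) ≤ t m + c)]
    rw [setIntegral_union (Set.Ioc_disjoint_Ioi le_rfl) measurableSet_Ioi
      (i1.union i2 |>.mono_set (by rw [Set.Ioc_union_Ioc_eq_Ioc hc.le hctm])) i3]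
  have hsplit2 : ∫ u in Set.Ioc (0 : ℝ) (t m + c), mfF m K c μ t n u
      = (∫ u in Set.Ioc (0 : ℝ) c, mfF m K c μ t n u)
        + ∫ u in Set.Ioc c (t m + c), mfF m K c μ t n u := by
    rw [← Set.Ioc_union_Ioc_eq_Ioc hc.le hctm]
    rw [setIntegral_union (Set.Ioc_disjoint_Ioc_of_le le_rfl) measurableSet_Ioc i1 i2]
  have hmid' : ∫ u in Set.Ioc c (t m + c), mfF m K c μ t n u
      = (∑ j ∈ Finset.Icc 1 m, ((n j : ℝ) / (μ * (mfNp n (j + 1) * mfNp n j))) * mfW K μ t n j)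
        + (1 / (μ * mfNp n (m + 1))) * mfW K μ t n m := by
    rw [← intervalIntegral.integral_of_le hctm]
    exact hmid m le_rfl
  rw [hsplit1, hsplit2, hbase, hmid', htail.2]
  -- final algebra
  have halg : (1 / μ) * ∑ k ∈ Finset.Icc 1 K, (1 / (k : ℝ)) *
      (1 / mfNp n (m + 1) + ∑ i ∈ Finset.Icc 1 m,
        ((n i : ℝ) / (mfNp n (i + 1) * mfNp n i))
          * (1 - Real.exp (-(μ * mfTau t n i))) ^ k)
      = (∑ j ∈ Finset.Icc 1 m, ((n j : ℝ) / (μ * (mfNp n (j + 1) * mfNp n j))) * mfW K μ t n j)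
        + (1 / (μ * mfNp n (m + 1))) * (∑ k ∈ Finset.Icc 1 K, 1 / (k : ℝ)) := by
    rw [Finset.mul_sum]
    have hterm : ∀ k ∈ Finset.Icc 1 K, (1 / μ) * ((1 / (k : ℝ)) *
        (1 / mfNp n (m + 1) + ∑ i ∈ Finset.Icc 1 m,
          ((n i : ℝ) / (mfNp n (i + 1) * mfNp n i))
            * (1 - Real.exp (-(μ * mfTau t n i))) ^ k))
        = (∑ i ∈ Finset.Icc 1 m, ((n i : ℝ) / (μ * (mfNp n (i + 1) * mfNp n i)))
            * ((1 - Real.exp (-(μ * mfTau t n i))) ^ k / (k : ℝ)))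
          + (1 / (μ * mfNp n (m + 1))) * (1 / (k : ℝ)) := by
      intro k _
      have h1 : (∑ i ∈ Finset.Icc 1 m, ((n i : ℝ) / (μ * (mfNp n (i + 1) * mfNp n i)))
            * ((1 - Real.exp (-(μ * mfTau t n i))) ^ k / (k : ℝ)))
          = (1 / μ) * ((1 / (k : ℝ)) * ∑ i ∈ Finset.Icc 1 m,
              ((n i : ℝ) / (mfNp n (i + 1) * mfNp n i))
                * (1 - Real.exp (-(μ * mfTau t n i))) ^ k) := by
        rw [Finset.mul_sum, Finset.mul_sum]
        exact Finset.sum_congr rfl fun i _ => by ring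
      rw [h1]
      ring
    rw [Finset.sum_congr rfl hterm, Finset.sum_add_distrib, Finset.sum_comm, ← Finset.mul_sum]
    congr 1
    refine Finset.sum_congr rfl fun i _ => ?_
    rw [← Finset.mul_sum]
    rfl
  rw [halg]
  ring
end

section
/- In the multi-fork model for a single task with shifted exponential service (shift c, rate μ, inter-forking gaps ≥ c, cost rate λ), the mean server utilization cost E[W_1] = λ ∑_{i=0}^m n_i E[(S_1 - t_i)_+] equals λ c n_0 + λ/μ + (λ/μ) ∑_{i=1}^{m} n_i e^{-μτ_i} (e^{μ N_{i-1} c} - 1)/N_{i-1}. -/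
open MeasureTheory Set Finset

noncomputable def Gf (m : ℕ) (c μ : ℝ) (t : ℕ → ℝ) (n : ℕ → ℕ) (u : ℝ) : ℝ :=
  Real.exp (-(μ * ∑ ℓ ∈ Finset.range (m + 1), (n ℓ : ℝ) * max (u - t ℓ - c) 0))

noncomputable def NNf (n : ℕ → ℕ) (i : ℕ) : ℝ := ∑ ℓ ∈ Finset.range i, (n ℓ : ℝ)

noncomputable def DDf (c : ℝ) (t : ℕ → ℝ) (n : ℕ → ℕ) (i : ℕ) : ℝ :=
  ∑ ℓ ∈ Finset.range i, (n ℓ : ℝ) * (t ℓ + c)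

noncomputable def tauf (t : ℕ → ℝ) (n : ℕ → ℕ) (i : ℕ) : ℝ :=
  ∑ ℓ ∈ Finset.range (i + 1), (n ℓ : ℝ) * (t i - t ℓ)

noncomputable def EEf (m : ℕ) (μ : ℝ) (t : ℕ → ℝ) (n : ℕ → ℕ) (k : ℕ) : ℝ :=
  if k ≤ m then Real.exp (-(μ * tauf t n k)) else 0

lemma exp_tail {k : ℝ} (hk : 0 < k) (b x : ℝ) :
    ∫ u in Set.Ioi x, Real.exp (-(k * u + b)) = Real.exp (-(k * x + b)) / k := by
  have hfun : (fun u : ℝ => Real.exp (-(k * u + b))) = fun u => Real.exp (-b) * Real.exp (-k * u) := by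
    funext u; rw [← Real.exp_add]; ring_nf
  have hint : IntegrableOn (fun u => Real.exp (-(k * u + b))) (Set.Ioi x) := by
    rw [hfun]; exact (exp_neg_integrableOn_Ioi x hk).const_mul (Real.exp (-b))
  have hderiv : ∀ u ∈ Set.Ici x, HasDerivAt (fun u => -Real.exp (-(k * u + b)) / k)
      (Real.exp (-(k * u + b))) u := by
    intro u _
    have h1 : HasDerivAt (fun u : ℝ => -(k * u + b)) (-k) u := by
      have := (((hasDerivAt_id u).const_mul k).add_const b).neg
      rw [mul_one] at this; exact this
    have h3 := (((Real.hasDerivAt_exp (-(k * u + b))).comp u h1).neg).div_const k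
    refine h3.congr_deriv ?_
    field_simp
  have htend : Filter.Tendsto (fun u => -Real.exp (-(k * u + b)) / k) Filter.atTop (nhds 0) := by
    have h1 : Filter.Tendsto (fun u : ℝ => -(k * u + b)) Filter.atTop Filter.atBot := by
      apply Filter.tendsto_neg_atBot_iff.mpr
      exact Filter.tendsto_atTop_add_const_right _ b (Filter.Tendsto.const_mul_atTop hk Filter.tendsto_id)
    have h2 : Filter.Tendsto (fun u : ℝ => Real.exp (-(k * u + b))) Filter.atTop (nhds 0) :=
      Real.tendsto_exp_atBot.comp h1
    simpa using (h2.neg).div_const k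
  rw [integral_Ioi_of_hasDerivAt_of_tendsto' hderiv hint htend]
  field_simp
  ring

lemma exp_Ioc {k : ℝ} (hk : 0 < k) (b x y : ℝ) (hxy : x ≤ y) :
    ∫ u in Set.Ioc x y, Real.exp (-(k * u + b)) =
      (Real.exp (-(k * x + b)) - Real.exp (-(k * y + b))) / k := by
  have hderiv : ∀ u ∈ Set.uIcc x y, HasDerivAt (fun u => -Real.exp (-(k * u + b)) / k)
      (Real.exp (-(k * u + b))) u := by
    intro u _
    have h1 : HasDerivAt (fun u : ℝ => -(k * u + b)) (-k) u := by
      have := (((hasDerivAt_id u).const_mul k).add_const b).neg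
      rw [mul_one] at this; exact this
    have h3 := (((Real.hasDerivAt_exp (-(k * u + b))).comp u h1).neg).div_const k
    refine h3.congr_deriv ?_
    field_simp
  have hcont : IntervalIntegrable (fun u => Real.exp (-(k * u + b))) volume x y := by
    apply Continuous.intervalIntegrable; continuity
  rw [← intervalIntegral.integral_of_le hxy, intervalIntegral.integral_eq_sub_of_hasDerivAt hderiv hcont]
  ring

lemma Gf_cont (m : ℕ) (c μ : ℝ) (t : ℕ → ℝ) (n : ℕ → ℕ) : Continuous (Gf m c μ t n) := by
  unfold Gf
  apply Real.continuous_exp.comp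
  apply Continuous.neg
  apply continuous_const.mul
  apply continuous_finset_sum
  intro ℓ _
  exact continuous_const.mul (Continuous.max (by continuity) continuous_const)

lemma Gf_int (m : ℕ) {c μ : ℝ} (hμ : 0 < μ) (t : ℕ → ℝ) {n : ℕ → ℕ} (hn0 : 0 < n 0)
    (a : ℝ) : IntegrableOn (Gf m c μ t n) (Set.Ioi a) := by
  have hk : (0:ℝ) < μ * n 0 := by positivity
  apply Integrable.mono' ((exp_neg_integrableOn_Ioi a hk).const_mul (Real.exp (μ * n 0 * (t 0 + c))))
  · exact (Gf_cont m c μ t n).aestronglyMeasurable.restrict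
  · filter_upwards with u
    rw [Gf, Real.norm_eq_abs, abs_of_pos (Real.exp_pos _), ← Real.exp_add]
    apply Real.exp_le_exp.mpr
    have h1 : (n 0 : ℝ) * max (u - t 0 - c) 0 ≤
        ∑ ℓ ∈ Finset.range (m + 1), (n ℓ : ℝ) * max (u - t ℓ - c) 0 := by
      apply Finset.single_le_sum (f := fun ℓ => (n ℓ : ℝ) * max (u - t ℓ - c) 0)
      · intro ℓ _; positivity
      · simp
    have h2 : u - t 0 - c ≤ max (u - t 0 - c) 0 := le_max_left _ _
    nlinarith [mul_le_mul_of_nonneg_left h2 (le_of_lt (show (0:ℝ) < (n 0:ℝ) by exact_mod_cast hn0)),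
      mul_le_mul_of_nonneg_left h1 hμ.le]

/-- Multi-fork model for a single task, shifted exponential service (shift `c`, rate `μ`),
inter-forking gaps at least `c`, server-cost rate `λ`. With survival function
`G u = exp (-μ ∑_{ℓ ≤ m, t ℓ + c ≤ u} n ℓ (u - t ℓ - c))`, the mean server utilization cost
`E W₁ = λ ∑_{i=0}^m n_i E[(S₁ - t_i)₊] = λ ∑_i n_i ∫_{t_i}^∞ G` equals
`λ c n₀ + λ/μ + (λ/μ) ∑_{i=1}^m n_i e^{-μτ_i} (e^{μ N_{i-1} c} - 1)/N_{i-1}`. -/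
theorem mean_utilization_multifork (m : ℕ) (c μ lam : ℝ) (hc : 0 < c) (hμ : 0 < μ)
    (hlam : 0 < lam)
    (t : ℕ → ℝ) (n : ℕ → ℕ) (ht0 : t 0 = 0) (hgap : ∀ j < m, c ≤ t (j + 1) - t j)
    (hn0 : 0 < n 0) :
    lam * ∑ i ∈ Finset.range (m + 1), (n i : ℝ) *
        ∫ u in Set.Ioi (t i),
          Real.exp (-(μ * ∑ ℓ ∈ (Finset.range (m + 1)).filter (fun ℓ => t ℓ + c ≤ u),
            (n ℓ : ℝ) * (u - t ℓ - c)))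
      = lam * c * (n 0 : ℝ) + lam / μ
        + (lam / μ) * ∑ i ∈ Finset.Icc 1 m,
            (n i : ℝ) * Real.exp (-(μ * ∑ ℓ ∈ Finset.range (i + 1), (n ℓ : ℝ) * (t i - t ℓ)))
              * (Real.exp (μ * (∑ ℓ ∈ Finset.range i, (n ℓ : ℝ)) * c) - 1)
              / (∑ ℓ ∈ Finset.range i, (n ℓ : ℝ)) := by
  -- replace the filtered sum by a max-sum (the function `Gf`)
  have hpt : ∀ u : ℝ, (∑ ℓ ∈ (Finset.range (m + 1)).filter (fun ℓ => t ℓ + c ≤ u),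
      (n ℓ : ℝ) * (u - t ℓ - c)) = ∑ ℓ ∈ Finset.range (m + 1), (n ℓ : ℝ) * max (u - t ℓ - c) 0 := by
    intro u
    rw [Finset.sum_filter]
    apply Finset.sum_congr rfl
    intro ℓ _
    split_ifs with h
    · rw [max_eq_left (by linarith)]
    · rw [max_eq_right (by push_neg at h; linarith), mul_zero]
  have hGfdef : ∀ u : ℝ, Real.exp (-(μ * ∑ ℓ ∈ Finset.range (m + 1), (n ℓ : ℝ) * max (u - t ℓ - c) 0))
      = Gf m c μ t n u := fun u => rfl
  simp only [hpt, hGfdef]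
  -- basic facts
  have hmono : ∀ ℓ j, ℓ < j → j ≤ m → t ℓ + c ≤ t j := by
    intro ℓ j
    induction j with
    | zero => omega
    | succ j ih =>
      intro hℓ hj
      have hstep : t j + c ≤ t (j+1) := by have := hgap j (by omega); linarith
      rcases Nat.lt_succ_iff_lt_or_eq.mp hℓ with h | h
      · have := ih h (by omega); linarith
      · subst h; exact hstep
  have htnn : ∀ ℓ, ℓ ≤ m → 0 ≤ t ℓ := by
    intro ℓ hℓ
    rcases Nat.eq_zero_or_pos ℓ with h | h
    · subst h; exact le_of_eq ht0.symm
    · have := hmono 0 ℓ h hℓ; rw [ht0] at this; linarith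
  have hNpos : ∀ i, 0 < NNf n (i + 1) := by
    intro i
    have h0 : (0:ℝ) < (n 0 : ℝ) := by exact_mod_cast hn0
    have : (n 0 : ℝ) ≤ NNf n (i + 1) := by
      apply Finset.single_le_sum (f := fun ℓ => (n ℓ : ℝ))
      · intro ℓ _; positivity
      · simp
    linarith
  have hkpos : ∀ i, 0 < μ * NNf n (i + 1) := fun i => mul_pos hμ (hNpos i)
  -- sum value on pieces
  have hval : ∀ i, i ≤ m → ∀ u : ℝ, t i + c ≤ u → (∀ ℓ, i < ℓ → ℓ ≤ m → u ≤ t ℓ + c) →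
      (∑ ℓ ∈ Finset.range (m + 1), (n ℓ : ℝ) * max (u - t ℓ - c) 0)
        = NNf n (i + 1) * u - DDf c t n (i + 1) := by
    intro i hi u hu1 hu2
    have hsplit : (∑ ℓ ∈ Finset.range (m + 1), (n ℓ : ℝ) * max (u - t ℓ - c) 0)
        = (∑ ℓ ∈ Finset.range (i + 1), (n ℓ : ℝ) * max (u - t ℓ - c) 0)
          + ∑ ℓ ∈ Finset.Ico (i + 1) (m + 1), (n ℓ : ℝ) * max (u - t ℓ - c) 0 := by
      simp only [Finset.range_eq_Ico]
      rw [Finset.sum_Ico_consecutive _ (by omega : 0 ≤ i + 1) (by omega : i + 1 ≤ m + 1)]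
    rw [hsplit]
    have h1 : ∑ ℓ ∈ Finset.range (i + 1), (n ℓ : ℝ) * max (u - t ℓ - c) 0
        = ∑ ℓ ∈ Finset.range (i + 1), ((n ℓ : ℝ) * u - (n ℓ : ℝ) * (t ℓ + c)) := by
      apply Finset.sum_congr rfl
      intro ℓ hℓ
      have hℓi : ℓ ≤ i := by simp at hℓ; omega
      have : t ℓ + c ≤ u := by
        rcases Nat.lt_or_ge ℓ i with h | h
        · have := hmono ℓ i h hi; linarith
        · have : ℓ = i := by omega
          subst this; linarith
      rw [max_eq_left (by linarith)]
      ring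
    have h2 : ∑ ℓ ∈ Finset.Ico (i + 1) (m + 1), (n ℓ : ℝ) * max (u - t ℓ - c) 0 = 0 := by
      apply Finset.sum_eq_zero
      intro ℓ hℓ
      simp only [Finset.mem_Ico] at hℓ
      have := hu2 ℓ (by omega) (by omega)
      rw [max_eq_right (by linarith), mul_zero]
    rw [h1, h2, Finset.sum_sub_distrib, ← Finset.sum_mul]
    rw [NNf, DDf]
    ring
  -- relations between linear values and tau
  have r1 : ∀ i, NNf n (i + 1) * (t i + c) - DDf c t n (i + 1) = tauf t n i := by
    intro i
    rw [NNf, DDf, tauf, Finset.sum_mul, ← Finset.sum_sub_distrib]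
    apply Finset.sum_congr rfl
    intro ℓ _; ring
  have r2 : ∀ i, NNf n (i + 1) * (t (i + 1) + c) - DDf c t n (i + 1) = tauf t n (i + 1) := by
    intro i
    rw [NNf, DDf, tauf, Finset.sum_range_succ (f := fun ℓ => (n ℓ : ℝ) * (t (i+1) - t ℓ))]
    rw [Finset.sum_mul, ← Finset.sum_sub_distrib]
    simp only [sub_self, mul_zero, add_zero]
    apply Finset.sum_congr rfl
    intro ℓ _; ring
  have r3 : ∀ i, NNf n (i + 1) * t (i + 1) - DDf c t n (i + 1)
      = tauf t n (i + 1) - NNf n (i + 1) * c := by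
    intro i
    have := r2 i
    nlinarith [r2 i]
  -- splitting of the improper integral
  have hsplitInt : ∀ x y : ℝ, x ≤ y →
      (∫ u in Set.Ioi x, Gf m c μ t n u)
        = (∫ u in Set.Ioc x y, Gf m c μ t n u) + ∫ u in Set.Ioi y, Gf m c μ t n u := by
    intro x y hxy
    rw [← Set.Ioc_union_Ioi_eq_Ioi hxy,
      setIntegral_union (Set.Ioc_disjoint_Ioi le_rfl) measurableSet_Ioi
        ((Gf_int m hμ t hn0 x).mono_set Set.Ioc_subset_Ioi_self) (Gf_int m hμ t hn0 y)]
  -- the tail formula, by downward induction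
  have P : ∀ d i, i + d = m →
      (∫ u in Set.Ioi (t i + c), Gf m c μ t n u)
        = ∑ k ∈ Finset.Icc i m, (EEf m μ t n k - EEf m μ t n (k + 1)) / (μ * NNf n (k + 1)) := by
    intro d
    induction d with
    | zero =>
      intro i hi
      have him : i = m := by omega
      subst him
      have hcongr : ∫ u in Set.Ioi (t i + c), Gf i c μ t n u
          = ∫ u in Set.Ioi (t i + c), Real.exp (-((μ * NNf n (i + 1)) * u + -(μ * DDf c t n (i + 1)))) := by
        apply setIntegral_congr_fun measurableSet_Ioi
        intro u hu
        rw [Gf, hval i le_rfl u (le_of_lt hu) (by intro ℓ h1 h2; exact absurd h2 (by omega))]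
        congr 1; ring
      rw [hcongr, exp_tail (hkpos i)]
      have hxval : (μ * NNf n (i + 1)) * (t i + c) + -(μ * DDf c t n (i + 1)) = μ * tauf t n i := by
        rw [← r1 i]; ring
      rw [hxval]
      rw [Finset.Icc_self, Finset.sum_singleton]
      rw [EEf, EEf, if_pos le_rfl, if_neg (by omega)]
      ring
    | succ d ih =>
      intro i hi
      have him : i < m := by omega
      have hle : t i + c ≤ t (i + 1) + c := by
        have := hgap i him; linarith
      rw [hsplitInt (t i + c) (t (i + 1) + c) hle]
      have hcongr : ∫ u in Set.Ioc (t i + c) (t (i + 1) + c), Gf m c μ t n u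
          = ∫ u in Set.Ioc (t i + c) (t (i + 1) + c),
              Real.exp (-((μ * NNf n (i + 1)) * u + -(μ * DDf c t n (i + 1)))) := by
        apply setIntegral_congr_fun measurableSet_Ioc
        intro u hu
        rw [Gf, hval i (by omega) u (le_of_lt hu.1) ?_]
        · congr 1; ring
        · intro ℓ h1 h2
          rcases Nat.lt_or_ge (i + 1) ℓ with h | h
          · have := hmono (i + 1) ℓ h h2
            have := hu.2; linarith
          · have : ℓ = i + 1 := by omega
            subst this; exact hu.2
      rw [hcongr, exp_Ioc (hkpos i) _ _ _ hle]
      have hxval : (μ * NNf n (i + 1)) * (t i + c) + -(μ * DDf c t n (i + 1)) = μ * tauf t n i := by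
        rw [← r1 i]; ring
      have hyval : (μ * NNf n (i + 1)) * (t (i + 1) + c) + -(μ * DDf c t n (i + 1)) = μ * tauf t n (i + 1) := by
        rw [← r2 i]; ring
      rw [hxval, hyval, ih (i + 1) (by omega)]
      rw [Finset.Icc_eq_cons_Ioc (by omega : i ≤ m), Finset.sum_cons, ← Finset.Icc_add_one_left_eq_Ioc]
      rw [EEf, EEf, if_pos (by omega : i ≤ m), if_pos (by omega : i + 1 ≤ m)]
  -- formula for each starting point t j
  have hItail : ∀ i, i ≤ m →
      (∫ u in Set.Ioi (t i + c), Gf m c μ t n u)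
        = ∑ k ∈ Finset.Icc i m, (EEf m μ t n k - EEf m μ t n (k + 1)) / (μ * NNf n (k + 1)) :=
    fun i hi => P (m - i) i (by omega)
  have hj0 : (∫ u in Set.Ioi (t 0), Gf m c μ t n u)
      = c + ∑ k ∈ Finset.Icc 0 m, (EEf m μ t n k - EEf m μ t n (k + 1)) / (μ * NNf n (k + 1)) := by
    have h1 : t 0 ≤ t 0 + c := by linarith
    rw [hsplitInt (t 0) (t 0 + c) h1, hItail 0 (by omega)]
    congr 1
    have hcongr : ∫ u in Set.Ioc (t 0) (t 0 + c), Gf m c μ t n u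
        = ∫ u in Set.Ioc (t 0) (t 0 + c), (1:ℝ) := by
      apply setIntegral_congr_fun measurableSet_Ioc
      intro u hu
      rw [Gf]
      have hzero : (∑ ℓ ∈ Finset.range (m + 1), (n ℓ : ℝ) * max (u - t ℓ - c) 0) = 0 := by
        apply Finset.sum_eq_zero
        intro ℓ hℓ
        simp only [Finset.mem_range] at hℓ
        have htℓ : t 0 ≤ t ℓ := by
          rcases Nat.eq_zero_or_pos ℓ with h | h
          · subst h; rfl
          · have := hmono 0 ℓ h (by omega); linarith
        have : u ≤ t ℓ + c := by
          have := hu.2; linarith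
        rw [max_eq_right (by linarith), mul_zero]
      rw [hzero, mul_zero, neg_zero, Real.exp_zero]
    rw [hcongr]
    simp [Real.volume_Ioc]
    linarith
  have hjpos : ∀ i, i + 1 ≤ m →
      (∫ u in Set.Ioi (t (i + 1)), Gf m c μ t n u)
        = EEf m μ t n (i + 1) * (Real.exp (μ * NNf n (i + 1) * c) - 1) / (μ * NNf n (i + 1))
          + ∑ k ∈ Finset.Icc (i + 1) m, (EEf m μ t n k - EEf m μ t n (k + 1)) / (μ * NNf n (k + 1)) := by
    intro i hi
    have h1 : t (i + 1) ≤ t (i + 1) + c := by linarith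
    rw [hsplitInt (t (i + 1)) (t (i + 1) + c) h1, hItail (i + 1) hi]
    congr 1
    have hcongr : ∫ u in Set.Ioc (t (i + 1)) (t (i + 1) + c), Gf m c μ t n u
        = ∫ u in Set.Ioc (t (i + 1)) (t (i + 1) + c),
            Real.exp (-((μ * NNf n (i + 1)) * u + -(μ * DDf c t n (i + 1)))) := by
      apply setIntegral_congr_fun measurableSet_Ioc
      intro u hu
      rw [Gf, hval i (by omega) u ?_ ?_]
      · congr 1; ring
      · have := hmono i (i + 1) (by omega) hi
        have := hu.1; linarith
      · intro ℓ h1' h2'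
        rcases Nat.lt_or_ge (i + 1) ℓ with h | h
        · have := hmono (i + 1) ℓ h h2'
          have := hu.2; linarith
        · have : ℓ = i + 1 := by omega
          subst this; exact hu.2
    rw [hcongr, exp_Ioc (hkpos i) _ _ _ (by linarith)]
    have hxval : (μ * NNf n (i + 1)) * (t (i + 1)) + -(μ * DDf c t n (i + 1))
        = μ * (tauf t n (i + 1) - NNf n (i + 1) * c) := by
      rw [← r3 i]; ring
    have hyval : (μ * NNf n (i + 1)) * (t (i + 1) + c) + -(μ * DDf c t n (i + 1)) = μ * tauf t n (i + 1) := by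
      rw [← r2 i]; ring
    rw [hxval, hyval]
    rw [EEf, if_pos hi]
    rw [show -(μ * (tauf t n (i + 1) - NNf n (i + 1) * c)) = -(μ * tauf t n (i + 1)) + μ * NNf n (i + 1) * c by ring,
      Real.exp_add]
    ring
  -- final assembly
  have hj' : ∀ j ∈ Finset.Icc 1 m, (∫ u in Set.Ioi (t j), Gf m c μ t n u)
      = EEf m μ t n j * (Real.exp (μ * NNf n j * c) - 1) / (μ * NNf n j)
        + ∑ k ∈ Finset.Icc j m, (EEf m μ t n k - EEf m μ t n (k + 1)) / (μ * NNf n (k + 1)) := by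
    intro j hj
    simp only [Finset.mem_Icc] at hj
    obtain ⟨i, rfl⟩ : ∃ i, j = i + 1 := ⟨j - 1, by omega⟩
    exact hjpos i (by omega)
  have hB : ∑ i ∈ Finset.range (m + 1), (n i : ℝ) *
      ∑ k ∈ Finset.Icc i m, (EEf m μ t n k - EEf m μ t n (k + 1)) / (μ * NNf n (k + 1))
        = 1 / μ := by
    simp only [Finset.mul_sum]
    rw [Finset.range_eq_Ico]
    simp only [← Finset.Ico_add_one_right_eq_Icc]
    rw [Finset.sum_Ico_Ico_comm 0 (m + 1)
      (fun i k => (n i : ℝ) * ((EEf m μ t n k - EEf m μ t n (k + 1)) / (μ * NNf n (k + 1))))]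
    have e2 : ∀ k ∈ Finset.Ico 0 (m + 1),
        (∑ i ∈ Finset.Ico 0 (k + 1), (n i : ℝ) * ((EEf m μ t n k - EEf m μ t n (k + 1)) / (μ * NNf n (k + 1))))
          = (EEf m μ t n k - EEf m μ t n (k + 1)) / μ := by
      intro k _
      rw [← Finset.sum_mul]
      have hNN : (∑ i ∈ Finset.Ico 0 (k + 1), (n i : ℝ)) = NNf n (k + 1) := by
        rw [NNf, Finset.range_eq_Ico]
      rw [hNN]
      have h1 := (hNpos k).ne'
      field_simp
    rw [Finset.sum_congr rfl e2, ← Finset.range_eq_Ico, ← Finset.sum_div,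
      Finset.sum_range_sub' (fun k => EEf m μ t n k) (m + 1)]
    have hE0 : EEf m μ t n 0 = 1 := by
      rw [EEf, if_pos (Nat.zero_le m)]
      have : tauf t n 0 = 0 := by simp [tauf]
      rw [this, mul_zero, neg_zero, Real.exp_zero]
    have hEm : EEf m μ t n (m + 1) = 0 := by
      rw [EEf, if_neg (by omega)]
    rw [hE0, hEm, sub_zero]
  have key : ∀ i ∈ Finset.range (m + 1), (n i : ℝ) * (∫ u in Set.Ioi (t i), Gf m c μ t n u)
      = (n i : ℝ) * (if i = 0 then c
            else EEf m μ t n i * (Real.exp (μ * NNf n i * c) - 1) / (μ * NNf n i))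
        + (n i : ℝ) * ∑ k ∈ Finset.Icc i m,
            (EEf m μ t n k - EEf m μ t n (k + 1)) / (μ * NNf n (k + 1)) := by
    intro i hi
    simp only [Finset.mem_range] at hi
    rcases Nat.eq_zero_or_pos i with h | h
    · subst h
      rw [hj0, if_pos rfl, mul_add]
    · rw [hj' i (Finset.mem_Icc.mpr ⟨h, by omega⟩), if_neg (by omega), mul_add]
  rw [Finset.sum_congr rfl key, Finset.sum_add_distrib, hB]
  have hsplit0 : ∑ i ∈ Finset.range (m + 1), ((n i : ℝ) * (if i = 0 then c
        else EEf m μ t n i * (Real.exp (μ * NNf n i * c) - 1) / (μ * NNf n i)))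
      = (n 0 : ℝ) * c + ∑ i ∈ Finset.Icc 1 m, ((n i : ℝ) * (if i = 0 then c
        else EEf m μ t n i * (Real.exp (μ * NNf n i * c) - 1) / (μ * NNf n i))) := by
    rw [Finset.range_eq_Ico, Finset.sum_eq_sum_Ico_succ_bot (by omega : 0 < m + 1)]
    rw [if_pos rfl, Finset.Ico_add_one_right_eq_Icc]
  rw [hsplit0]
  have last : ∀ i ∈ Finset.Icc 1 m,
      (n i : ℝ) * (if i = 0 then c
          else EEf m μ t n i * (Real.exp (μ * NNf n i * c) - 1) / (μ * NNf n i))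
        = (1 / μ) * ((n i : ℝ)
            * Real.exp (-(μ * ∑ ℓ ∈ Finset.range (i + 1), (n ℓ : ℝ) * (t i - t ℓ)))
            * (Real.exp (μ * (∑ ℓ ∈ Finset.range i, (n ℓ : ℝ)) * c) - 1)
            / (∑ ℓ ∈ Finset.range i, (n ℓ : ℝ))) := by
    intro i hi
    simp only [Finset.mem_Icc] at hi
    rw [if_neg (by omega), EEf, if_pos hi.2, tauf, NNf]
    have hN : (0:ℝ) < ∑ ℓ ∈ Finset.range i, (n ℓ : ℝ) := by
      have h1 := hNpos (i - 1)
      rw [NNf, show i - 1 + 1 = i by omega] at h1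
      exact h1
    field_simp
  rw [Finset.sum_congr rfl last, ← Finset.mul_sum]
  ring
end

section
/- For a single task forked with batches (n_0,...,n_m) at times (t_0,...,t_m) and i.i.d. shifted exponential service (shift c, rate μ) with inter-forking gaps ≥ c, the mean completion time is E[S_1] = c + 1/(Nμ) + (1/μ) ∑_{i=1}^{m} (n_i / (N_i N_{i-1})) (1 - e^{-μτ_i}), where N = N_m. -/
open MeasureTheory Set Real Filter

private lemma integral_exp_affine (C D p q : ℝ) (hD : D ≠ 0) :
    ∫ u in p..q, Real.exp (C - D * u)
      = (Real.exp (C - D * p) - Real.exp (C - D * q)) / D := by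
  have hder : ∀ u : ℝ, HasDerivAt (fun v => -(Real.exp (C - D * v) / D))
      (Real.exp (C - D * u)) u := by
    intro u
    have h1 : HasDerivAt (fun v : ℝ => C - D * v) (-D) u := by
      simpa using ((hasDerivAt_id u).const_mul D).const_sub C
    have h2 := ((h1.exp).div_const D).neg
    rw [show Real.exp (C - D * u) = -(Real.exp (C - D * u) * -D / D) by
      rw [mul_neg, neg_div, neg_neg, mul_div_assoc, div_self hD, mul_one]]
    exact h2
  rw [intervalIntegral.integral_eq_sub_of_hasDerivAt (fun u _ => hder u)
    ((Real.continuous_exp.comp (by continuity)).intervalIntegrable p q)]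
  field_simp
  ring

private lemma integrableOn_exp_affine_Ioi (C D p : ℝ) (hD : 0 < D) :
    IntegrableOn (fun u : ℝ => Real.exp (C - D * u)) (Set.Ioi p) := by
  have hfun : (fun u : ℝ => Real.exp (C - D * u))
      = fun u => Real.exp C * Real.exp (-D * u) := by
    funext u; rw [← Real.exp_add]; ring_nf
  rw [hfun]; exact (exp_neg_integrableOn_Ioi p hD).const_mul _

private lemma integral_exp_affine_Ioi (C D p : ℝ) (hD : 0 < D) :
    ∫ u in Set.Ioi p, Real.exp (C - D * u) = Real.exp (C - D * p) / D := by
  have hder : ∀ u ∈ Set.Ici p, HasDerivAt (fun v => -(Real.exp (C - D * v) / D))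
      (Real.exp (C - D * u)) u := by
    intro u _
    have h1 : HasDerivAt (fun v : ℝ => C - D * v) (-D) u := by
      simpa using ((hasDerivAt_id u).const_mul D).const_sub C
    have h2 := ((h1.exp).div_const D).neg
    rw [show Real.exp (C - D * u) = -(Real.exp (C - D * u) * -D / D) by
      rw [mul_neg, neg_div, neg_neg, mul_div_assoc, div_self hD.ne', mul_one]]
    exact h2
  have htend : Tendsto (fun v => -(Real.exp (C - D * v) / D)) atTop (nhds 0) := by
    have h1 : Tendsto (fun v : ℝ => C - D * v) atTop atBot := by
      have h0 : Tendsto (fun v : ℝ => D * v) atTop atTop :=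
        (tendsto_const_mul_atTop_of_pos hD).mpr tendsto_id
      have h0' : Tendsto (fun v : ℝ => -(D * v)) atTop atBot :=
        tendsto_neg_atTop_atBot.comp h0
      simpa [sub_eq_add_neg] using tendsto_atBot_add_const_left atTop C h0'
    have h2 := (Real.tendsto_exp_atBot.comp h1).div_const D |>.neg
    simpa using h2
  have := integral_Ioi_of_hasDerivAt_of_tendsto' hder
    (integrableOn_exp_affine_Ioi C D p hD) htend
  rw [this]
  field_simp
  ring

private lemma telescope_formula (μ : ℝ) (hμ : μ ≠ 0) (N x nn : ℕ → ℝ)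
    (hN : ∀ i, N i ≠ 0) (hx0 : x 0 = 1) (hrec : ∀ i, N (i + 1) = N i + nn (i + 1)) :
    ∀ m : ℕ, (∑ i ∈ Finset.range m, (x i - x (i + 1)) / (μ * N i)) + x m / (μ * N m)
      = 1 / (N m * μ) + (1 / μ) * ∑ i ∈ Finset.Icc 1 m,
          (nn i / (N i * N (i - 1))) * (1 - x i) := by
  intro m
  induction m with
  | zero =>
      simp only [Finset.range_zero, Finset.sum_empty, zero_add, hx0]
      rw [show Finset.Icc 1 0 = ∅ by rfl]
      simp only [Finset.sum_empty, mul_zero, add_zero]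
      rw [mul_comm]
  | succ k ih =>
      have h1 : (1 : ℕ) ≤ k + 1 := le_add_self
      rw [Finset.sum_range_succ, Finset.sum_Icc_succ_top h1]
      have hnn : nn (k + 1) = N (k + 1) - N k := by rw [hrec k]; ring
      have e : ∑ i ∈ Finset.range k, (x i - x (i + 1)) / (μ * N i)
          = 1 / (N k * μ) + (1 / μ) * ∑ i ∈ Finset.Icc 1 k,
              (nn i / (N i * N (i - 1))) * (1 - x i) - x k / (μ * N k) := by
        linarith [ih]
      rw [e, hnn]
      simp only [Nat.add_sub_cancel]
      have hk := hN k
      have hk1 := hN (k + 1)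
      field_simp [hk, hk1, hμ]
      ring

/-- Multi-fork model for a single task, shifted exponential service (shift `c`, rate `μ`),
inter-forking gaps at least `c`. With survival function
`G u = exp (-μ ∑_{ℓ ≤ m, t ℓ + c ≤ u} n ℓ (u - t ℓ - c))`, the mean completion time
`E S₁ = ∫_0^∞ G u du` equals
`c + 1/(N μ) + (1/μ) ∑_{i=1}^m (n_i/(N_i N_{i-1})) (1 - e^{-μτ_i})` where `N = N_m`. -/
theorem mean_completion_single_task (m : ℕ) (c μ : ℝ) (hc : 0 < c) (hμ : 0 < μ)
    (t : ℕ → ℝ) (n : ℕ → ℕ) (ht0 : t 0 = 0) (hgap : ∀ j < m, c ≤ t (j + 1) - t j)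
    (hn0 : 0 < n 0) :
    ∫ u in Set.Ioi (0 : ℝ),
        Real.exp (-(μ * ∑ ℓ ∈ (Finset.range (m + 1)).filter (fun ℓ => t ℓ + c ≤ u),
          (n ℓ : ℝ) * (u - t ℓ - c)))
      = c + 1 / ((∑ ℓ ∈ Finset.range (m + 1), (n ℓ : ℝ)) * μ)
        + (1 / μ) * ∑ i ∈ Finset.Icc 1 m,
            ((n i : ℝ) / ((∑ ℓ ∈ Finset.range (i + 1), (n ℓ : ℝ))
                * (∑ ℓ ∈ Finset.range i, (n ℓ : ℝ))))
              * (1 - Real.exp (-(μ * ∑ ℓ ∈ Finset.range (i + 1),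
                  (n ℓ : ℝ) * (t i - t ℓ)))) := by
  have hμ' : μ ≠ 0 := ne_of_gt hμ
  -- monotonicity of t up to m
  have hmono : ∀ j, j ≤ m → ∀ ℓ, ℓ ≤ j → t ℓ ≤ t j := by
    intro j
    induction j with
    | zero => intro _ ℓ hℓ; interval_cases ℓ; exact le_rfl
    | succ k ih =>
        intro hk ℓ hℓ
        have hstep : c ≤ t (k + 1) - t k := hgap k (by omega)
        by_cases hcase : ℓ ≤ k
        · have := ih (by omega) ℓ hcase; linarith
        · have hek : ℓ = k + 1 := by omega
          rw [hek]
  have htnn : ∀ ℓ, ℓ ≤ m → 0 ≤ t ℓ := by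
    intro ℓ hℓ
    have h := hmono ℓ hℓ 0 (Nat.zero_le _)
    rw [ht0] at h; exact h
  -- positivity of partial sums
  have hNpos : ∀ i : ℕ, 0 < ∑ ℓ ∈ Finset.range (i + 1), (n ℓ : ℝ) := by
    intro i
    have h0 : (0 : ℝ) < (n 0 : ℝ) := by exact_mod_cast hn0
    have hle : (n 0 : ℝ) ≤ ∑ ℓ ∈ Finset.range (i + 1), (n ℓ : ℝ) :=
      Finset.single_le_sum (f := fun ℓ => (n ℓ : ℝ)) (fun ℓ _ => by positivity)
        (Finset.mem_range.mpr (Nat.succ_pos i))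
    linarith
  set g : ℝ → ℝ := fun u => Real.exp (-(μ * ∑ ℓ ∈ Finset.range (m + 1),
      (n ℓ : ℝ) * max (u - t ℓ - c) 0)) with hg_def
  have hgeq : ∀ u : ℝ, Real.exp (-(μ * ∑ ℓ ∈ (Finset.range (m + 1)).filter
      (fun ℓ => t ℓ + c ≤ u), (n ℓ : ℝ) * (u - t ℓ - c))) = g u := by
    intro u
    simp only [hg_def]
    congr 2
    rw [Finset.sum_filter]
    congr 1
    refine Finset.sum_congr rfl fun ℓ _ => ?_
    by_cases h : t ℓ + c ≤ u
    · rw [if_pos h, max_eq_left (by linarith)]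
    · rw [if_neg h, max_eq_right (by push_neg at h; linarith), mul_zero]
  have hgcont : Continuous g := by
    apply Real.continuous_exp.comp
    apply Continuous.neg
    apply continuous_const.mul
    apply continuous_finset_sum
    intro ℓ _
    exact continuous_const.mul
      (((continuous_id.sub continuous_const).sub continuous_const).max continuous_const)
  -- the partition points
  set b : ℕ → ℝ := fun k => if k = 0 then (0 : ℝ) else t (k - 1) + c with hb_def
  have hb0 : b 0 = 0 := by simp [hb_def]
  have hbs : ∀ k : ℕ, b (k + 1) = t k + c := by intro k; simp [hb_def]
  -- identification of g on pieces
  have hsum2 : ∀ (k : ℕ) (u : ℝ), ∑ ℓ ∈ Finset.range k, (n ℓ : ℝ) * (u - t ℓ - c)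
      = (∑ ℓ ∈ Finset.range k, (n ℓ : ℝ)) * u
        - ∑ ℓ ∈ Finset.range k, (n ℓ : ℝ) * (t ℓ + c) := by
    intro k u
    rw [Finset.sum_mul, ← Finset.sum_sub_distrib]
    exact Finset.sum_congr rfl fun ℓ _ => by ring
  have hpiece : ∀ k, k ≤ m → ∀ u, b k ≤ u → u ≤ t k + c →
      g u = Real.exp (-(μ * ∑ ℓ ∈ Finset.range k, (n ℓ : ℝ) * (u - t ℓ - c))) := by
    intro k hk u hu1 hu2
    simp only [hg_def]
    congr 2
    congr 1
    rw [← Finset.sum_subset (Finset.range_subset_range.mpr (by omega : k ≤ m + 1))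
      (fun ℓ hℓ hℓ' => ?_)]
    · refine Finset.sum_congr rfl fun ℓ hℓ => ?_
      have hℓk : ℓ < k := Finset.mem_range.mp hℓ
      have hk0 : k ≠ 0 := by omega
      have hbk : b k = t (k - 1) + c := by simp [hb_def, hk0]
      have htℓ : t ℓ ≤ t (k - 1) := hmono (k - 1) (by omega) ℓ (by omega)
      rw [max_eq_left (by rw [hbk] at hu1; linarith)]
    · have hℓm : ℓ ≤ m := by simpa [Nat.lt_succ_iff] using Finset.mem_range.mp hℓ
      have hkℓ : k ≤ ℓ := by
        simp only [Finset.mem_range, not_lt] at hℓ'; exact hℓ'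
      have htk : t k ≤ t ℓ := hmono ℓ hℓm k hkℓ
      rw [max_eq_right (by linarith), mul_zero]
  -- exponent computations
  have hexp1 : ∀ i : ℕ,
      μ * (∑ ℓ ∈ Finset.range (i + 1), (n ℓ : ℝ) * (t ℓ + c))
        - μ * (∑ ℓ ∈ Finset.range (i + 1), (n ℓ : ℝ)) * (t i + c)
      = -(μ * ∑ ℓ ∈ Finset.range (i + 1), (n ℓ : ℝ) * (t i - t ℓ)) := by
    intro i
    have h : (∑ ℓ ∈ Finset.range (i + 1), (n ℓ : ℝ)) * (t i + c)
        - ∑ ℓ ∈ Finset.range (i + 1), (n ℓ : ℝ) * (t ℓ + c)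
        = ∑ ℓ ∈ Finset.range (i + 1), (n ℓ : ℝ) * (t i - t ℓ) := by
      rw [Finset.sum_mul, ← Finset.sum_sub_distrib]
      exact Finset.sum_congr rfl fun ℓ _ => by ring
    linear_combination -μ * h
  have hexp2 : ∀ i : ℕ,
      μ * (∑ ℓ ∈ Finset.range (i + 1), (n ℓ : ℝ) * (t ℓ + c))
        - μ * (∑ ℓ ∈ Finset.range (i + 1), (n ℓ : ℝ)) * (t (i + 1) + c)
      = -(μ * ∑ ℓ ∈ Finset.range (i + 2), (n ℓ : ℝ) * (t (i + 1) - t ℓ)) := by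
    intro i
    have hτ : ∑ ℓ ∈ Finset.range (i + 2), (n ℓ : ℝ) * (t (i + 1) - t ℓ)
        = ∑ ℓ ∈ Finset.range (i + 1), (n ℓ : ℝ) * (t (i + 1) - t ℓ) := by
      rw [Finset.sum_range_succ]; simp
    have h : (∑ ℓ ∈ Finset.range (i + 1), (n ℓ : ℝ)) * (t (i + 1) + c)
        - ∑ ℓ ∈ Finset.range (i + 1), (n ℓ : ℝ) * (t ℓ + c)
        = ∑ ℓ ∈ Finset.range (i + 1), (n ℓ : ℝ) * (t (i + 1) - t ℓ) := by
      rw [Finset.sum_mul, ← Finset.sum_sub_distrib]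
      exact Finset.sum_congr rfl fun ℓ _ => by ring
    rw [hτ]
    linear_combination -μ * h
  -- tail identification
  have htail : EqOn g (fun u => Real.exp
      ((μ * ∑ ℓ ∈ Finset.range (m + 1), (n ℓ : ℝ) * (t ℓ + c))
        - (μ * ∑ ℓ ∈ Finset.range (m + 1), (n ℓ : ℝ)) * u)) (Set.Ioi (t m + c)) := by
    intro u hu
    have hu' : t m + c < u := hu
    simp only [hg_def]
    congr 1
    have hcg : ∀ ℓ ∈ Finset.range (m + 1),
        (n ℓ : ℝ) * max (u - t ℓ - c) 0 = (n ℓ : ℝ) * (u - t ℓ - c) := by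
      intro ℓ hℓ
      have hℓm : ℓ ≤ m := by simpa [Nat.lt_succ_iff] using Finset.mem_range.mp hℓ
      have := hmono m le_rfl ℓ hℓm
      rw [max_eq_left (by linarith)]
    rw [Finset.sum_congr rfl hcg, hsum2 (m + 1) u]
    ring
  have hD : 0 < μ * ∑ ℓ ∈ Finset.range (m + 1), (n ℓ : ℝ) :=
    mul_pos hμ (hNpos m)
  -- integrability
  have h0A : (0 : ℝ) ≤ t m + c := by have := htnn m le_rfl; linarith
  have hintIoc : IntegrableOn g (Set.Ioc 0 (t m + c)) := hgcont.integrableOn_Ioc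
  have hintIoi : IntegrableOn g (Set.Ioi (t m + c)) :=
    (integrableOn_exp_affine_Ioi _ _ _ hD).congr_fun (fun u hu => (htail hu).symm)
      measurableSet_Ioi
  -- split the integral
  rw [setIntegral_congr_fun measurableSet_Ioi (fun u _ => hgeq u)]
  rw [← Set.Ioc_union_Ioi_eq_Ioi h0A,
    setIntegral_union (Set.Ioc_disjoint_Ioi le_rfl) measurableSet_Ioi hintIoc hintIoi]
  -- tail value
  have hIoi : ∫ u in Set.Ioi (t m + c), g u
      = Real.exp (-(μ * ∑ ℓ ∈ Finset.range (m + 1), (n ℓ : ℝ) * (t m - t ℓ)))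
        / (μ * ∑ ℓ ∈ Finset.range (m + 1), (n ℓ : ℝ)) := by
    rw [setIntegral_congr_fun measurableSet_Ioi htail,
      integral_exp_affine_Ioi _ _ _ hD, hexp1 m]
  -- split Ioc into adjacent intervals
  have hadj : ∑ k ∈ Finset.range (m + 1), ∫ u in (b k)..(b (k + 1)), g u
      = ∫ u in (0 : ℝ)..(t m + c), g u := by
    have := intervalIntegral.sum_integral_adjacent_intervals
      (a := b) (n := m + 1) (f := g) (μ := volume)
      (fun k _ => hgcont.intervalIntegrable _ _)
    rwa [hb0, hbs m] at this
  have hIoc : ∫ u in Set.Ioc 0 (t m + c), g u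
      = ∑ k ∈ Finset.range (m + 1), ∫ u in (b k)..(b (k + 1)), g u := by
    rw [hadj, intervalIntegral.integral_of_le h0A]
  -- value of the first piece
  have hf0 : ∫ u in (b 0)..(b 1), g u = c := by
    rw [hb0, hbs 0, ht0, zero_add]
    rw [intervalIntegral.integral_congr (g := fun _ => (1 : ℝ)) ?_]
    · simp
    · intro u hu
      rw [Set.uIcc_of_le (le_of_lt hc)] at hu
      rw [hpiece 0 (Nat.zero_le m) u (by rw [hb0]; exact hu.1)
        (by rw [ht0, zero_add]; exact hu.2)]
      simp
  -- value of the later pieces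
  have hfi : ∀ i, i < m → ∫ u in (b (i + 1))..(b (i + 2)), g u
      = (Real.exp (-(μ * ∑ ℓ ∈ Finset.range (i + 1), (n ℓ : ℝ) * (t i - t ℓ)))
          - Real.exp (-(μ * ∑ ℓ ∈ Finset.range (i + 1 + 1), (n ℓ : ℝ) * (t (i + 1) - t ℓ))))
        / (μ * ∑ ℓ ∈ Finset.range (i + 1), (n ℓ : ℝ)) := by
    intro i hi
    have hle' : t i + c ≤ t (i + 1) + c := by
      have := hgap i hi; linarith
    rw [hbs, hbs]
    have heq : EqOn g (fun u => Real.exp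
        ((μ * ∑ ℓ ∈ Finset.range (i + 1), (n ℓ : ℝ) * (t ℓ + c))
          - (μ * ∑ ℓ ∈ Finset.range (i + 1), (n ℓ : ℝ)) * u))
        (Set.uIcc (t i + c) (t (i + 1) + c)) := by
      intro u hu
      rw [Set.uIcc_of_le hle'] at hu
      rw [hpiece (i + 1) (by omega) u (by rw [hbs]; exact hu.1) hu.2]
      congr 1
      rw [hsum2 (i + 1) u]
      ring
    rw [intervalIntegral.integral_congr heq,
      integral_exp_affine _ _ _ _ (ne_of_gt (mul_pos hμ (hNpos i))),
      hexp1 i, hexp2 i]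
  -- assemble
  rw [hIoc, hIoi, Finset.sum_range_succ']
  rw [hf0]
  rw [Finset.sum_congr rfl (fun i hi => hfi i (Finset.mem_range.mp hi))]
  have htel := telescope_formula μ hμ'
    (fun i => ∑ ℓ ∈ Finset.range (i + 1), (n ℓ : ℝ))
    (fun i => Real.exp (-(μ * ∑ ℓ ∈ Finset.range (i + 1), (n ℓ : ℝ) * (t i - t ℓ))))
    (fun i => (n i : ℝ))
    (fun i => ne_of_gt (hNpos i))
    (by simp)
    (fun i => Finset.sum_range_succ _ _) m
  simp only [div_eq_mul_inv] at htel ⊢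
  have hIccEq : (∑ i ∈ Finset.Icc 1 m, (n i : ℝ)
        * ((∑ ℓ ∈ Finset.range (i + 1), (n ℓ : ℝ))
            * ∑ ℓ ∈ Finset.range (i - 1 + 1), (n ℓ : ℝ))⁻¹
        * (1 - Real.exp (-(μ * ∑ ℓ ∈ Finset.range (i + 1), (n ℓ : ℝ) * (t i - t ℓ)))))
      = ∑ i ∈ Finset.Icc 1 m, (n i : ℝ)
        * ((∑ ℓ ∈ Finset.range (i + 1), (n ℓ : ℝ)) * ∑ ℓ ∈ Finset.range i, (n ℓ : ℝ))⁻¹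
        * (1 - Real.exp (-(μ * ∑ ℓ ∈ Finset.range (i + 1), (n ℓ : ℝ) * (t i - t ℓ)))) :=
    Finset.sum_congr rfl fun i hi => by
      rw [Nat.sub_add_cancel (Finset.mem_Icc.mp hi).1]
  rw [hIccEq] at htel
  linarith [htel]
end

section
/- Fix forking times t = (t_0,...,t_m) and two batch sequences n, n' such that for every stage i, ∑_{j≤i} n'_j ≤ ∑_{j≤i} n_j and ∑_{j≤i} n'_j t_j ≥ ∑_{j≤i} n_j t_j. For i.i.d. shifted exponential service times (shift c, rate μ), the single-task completion time distributions satisfy P(S^{(n)}_1 > u) ≤ P(S^{(n')}_1 > u) for every u, and hence E[S^{(n)}] ≤ E[S^{(n')}] for the makespan of K tasks. -/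
open MeasureTheory

/-- Fix forking times `t` (gaps at least `c`, `t 0 = 0`) and two batch sequences `n, n'` with
`∑_{j≤i} n' j ≤ ∑_{j≤i} n j` and `∑_{j≤i} n' j · t j ≥ ∑_{j≤i} n j · t j` for every stage `i`.
For i.i.d. shifted exponential service (shift `c`, rate `μ`), the survival functions
`G_n u = exp (-μ ∑_{ℓ ≤ m, t ℓ + c ≤ u} n ℓ (u - t ℓ - c))` satisfy `G_n u ≤ G_{n'} u` for
every `u`, and the mean makespan of `K` tasks satisfies `E S^(n) ≤ E S^(n')`. -/
theorem makespan_mono_shiftedExp (m K : ℕ) (hK : 1 ≤ K) (c μ : ℝ) (hc : 0 < c) (hμ : 0 < μ)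
    (t : ℕ → ℝ) (n n' : ℕ → ℕ) (ht0 : t 0 = 0) (hgap : ∀ j < m, c ≤ t (j + 1) - t j)
    (hN : ∀ i ≤ m, ∑ j ∈ Finset.range (i + 1), (n' j : ℝ)
        ≤ ∑ j ∈ Finset.range (i + 1), (n j : ℝ))
    (hτ : ∀ i ≤ m, ∑ j ∈ Finset.range (i + 1), (n j : ℝ) * t j
        ≤ ∑ j ∈ Finset.range (i + 1), (n' j : ℝ) * t j) :
    (∀ u : ℝ,
      Real.exp (-(μ * ∑ ℓ ∈ (Finset.range (m + 1)).filter (fun ℓ => t ℓ + c ≤ u),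
          (n ℓ : ℝ) * (u - t ℓ - c)))
        ≤ Real.exp (-(μ * ∑ ℓ ∈ (Finset.range (m + 1)).filter (fun ℓ => t ℓ + c ≤ u),
          (n' ℓ : ℝ) * (u - t ℓ - c))))
    ∧ ∫⁻ u in Set.Ioi (0 : ℝ), ENNReal.ofReal (1 -
          (1 - Real.exp (-(μ * ∑ ℓ ∈ (Finset.range (m + 1)).filter (fun ℓ => t ℓ + c ≤ u),
            (n ℓ : ℝ) * (u - t ℓ - c)))) ^ K)
        ≤ ∫⁻ u in Set.Ioi (0 : ℝ), ENNReal.ofReal (1 -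
          (1 - Real.exp (-(μ * ∑ ℓ ∈ (Finset.range (m + 1)).filter (fun ℓ => t ℓ + c ≤ u),
            (n' ℓ : ℝ) * (u - t ℓ - c)))) ^ K) := by
  have hmono : ∀ a b : ℕ, a ≤ b → b ≤ m → t a ≤ t b := by
    intro a b hab hbm
    induction b with
    | zero => interval_cases a; exact le_refl _
    | succ k ih =>
      rcases Nat.lt_succ_iff_lt_or_eq.mp (Nat.lt_succ_of_le hab) with h | h
      · have h1 := hgap k (by omega)
        have h2 := ih (by omega) (by omega)
        linarith
      · subst h; exact le_refl _
  -- key sum inequality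
  have key : ∀ u : ℝ,
      ∑ ℓ ∈ (Finset.range (m + 1)).filter (fun ℓ => t ℓ + c ≤ u),
          (n' ℓ : ℝ) * (u - t ℓ - c)
      ≤ ∑ ℓ ∈ (Finset.range (m + 1)).filter (fun ℓ => t ℓ + c ≤ u),
          (n ℓ : ℝ) * (u - t ℓ - c) := by
    intro u
    set F := (Finset.range (m + 1)).filter (fun ℓ => t ℓ + c ≤ u) with hF
    rcases F.eq_empty_or_nonempty with h | h
    · simp [h]
    · set i := F.max' h with hi
      have hiF : i ∈ F := F.max'_mem h
      have him : i ≤ m := by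
        have := Finset.mem_range.mp (Finset.mem_filter.mp hiF).1
        omega
      have hiu : t i + c ≤ u := (Finset.mem_filter.mp hiF).2
      have hFeq : F = Finset.range (i + 1) := by
        ext ℓ
        simp only [Finset.mem_range, Nat.lt_succ_iff]
        constructor
        · intro hℓ; exact F.le_max' ℓ hℓ
        · intro hℓ
          rw [hF, Finset.mem_filter, Finset.mem_range, Nat.lt_succ_iff]
          refine ⟨le_trans hℓ him, ?_⟩
          have := hmono ℓ i hℓ him
          linarith
      have ht0i : (0 : ℝ) ≤ t i := ht0 ▸ hmono 0 i (Nat.zero_le i) him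
      rw [hFeq]
      have expand : ∀ g : ℕ → ℕ,
          ∑ ℓ ∈ Finset.range (i + 1), (g ℓ : ℝ) * (u - t ℓ - c)
          = (u - c) * ∑ ℓ ∈ Finset.range (i + 1), (g ℓ : ℝ)
            - ∑ ℓ ∈ Finset.range (i + 1), (g ℓ : ℝ) * t ℓ := by
        intro g
        rw [Finset.mul_sum, ← Finset.sum_sub_distrib]
        exact Finset.sum_congr rfl fun ℓ _ => by ring
      rw [expand n, expand n']
      have h1 := hN i him
      have h2 := hτ i him
      have huc : (0 : ℝ) ≤ u - c := by linarith
      have h3 := mul_le_mul_of_nonneg_left h1 huc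
      linarith
  have hexp : ∀ u : ℝ,
      Real.exp (-(μ * ∑ ℓ ∈ (Finset.range (m + 1)).filter (fun ℓ => t ℓ + c ≤ u),
          (n ℓ : ℝ) * (u - t ℓ - c)))
        ≤ Real.exp (-(μ * ∑ ℓ ∈ (Finset.range (m + 1)).filter (fun ℓ => t ℓ + c ≤ u),
          (n' ℓ : ℝ) * (u - t ℓ - c))) := by
    intro u
    apply Real.exp_le_exp.mpr
    have := mul_le_mul_of_nonneg_left (key u) hμ.le
    linarith
  refine ⟨hexp, ?_⟩
  apply lintegral_mono
  intro u
  apply ENNReal.ofReal_le_ofReal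
  have hnn : ∀ g : ℕ → ℕ,
      0 ≤ ∑ ℓ ∈ (Finset.range (m + 1)).filter (fun ℓ => t ℓ + c ≤ u),
        (g ℓ : ℝ) * (u - t ℓ - c) := by
    intro g
    apply Finset.sum_nonneg
    intro ℓ hℓ
    have := (Finset.mem_filter.mp hℓ).2
    have : (0 : ℝ) ≤ u - t ℓ - c := by linarith
    positivity
  set A := Real.exp (-(μ * ∑ ℓ ∈ (Finset.range (m + 1)).filter (fun ℓ => t ℓ + c ≤ u),
      (n ℓ : ℝ) * (u - t ℓ - c))) with hA
  set B := Real.exp (-(μ * ∑ ℓ ∈ (Finset.range (m + 1)).filter (fun ℓ => t ℓ + c ≤ u),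
      (n' ℓ : ℝ) * (u - t ℓ - c))) with hB
  have hAB : A ≤ B := hexp u
  have hB1 : B ≤ 1 := by
    apply Real.exp_le_one_iff.mpr
    have := mul_nonneg hμ.le (hnn n')
    linarith
  have hpow : (1 - B) ^ K ≤ (1 - A) ^ K := by
    apply pow_le_pow_left₀ (by linarith) (by linarith)
  linarith
end

section
/- For single forking (m = 1) of K tasks with shifted exponential service (shift c, rate μ), batches (n_0, N - n_0) at times (0, t_1) with t_1 > 0, let α = cμN, x = n_0/N, u = t_1/c. The mean makespan satisfies E[S]/c = 1 + (1/α) ∑_{k=1}^{K} (1/k) ( 1 + ((1-x)/x)(1 - e^{-αxu})^k ). -/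
open MeasureTheory Set Filter Topology Finset Real

/-!
Split the half-line at `c` and `t₁ + c`. Before `c` no task has finished, so the tail of
the makespan is `1`. After `c` the tail of one task has the form `q e^{-β(s-a)}`: with
`q = 1`, `β = μn₀`, `a = c` on `[c, t₁ + c]`, and `q = e^{-μn₀t₁}`, `β = μN`, `a = t₁ + c`
beyond. For such a tail, `1 - (1 - q e^{-β(s-a)})^K` has the primitive
`∑_{k<K} (1 - q e^{-β(s-a)})^{k+1} / ((k+1)β)`, because with `p = q e^{-β(s-a)}` its
derivative is the geometric sum `∑_{k<K} (1-p)^k p`. Evaluating the primitive at the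
breakpoints and at `∞` gives the closed form.
-/

theorem sum_Icc_one_eq_sum_range {M : Type*} [AddCommMonoid M] (f : ℕ → M) (K : ℕ) :
    ∑ k ∈ Icc 1 K, f k = ∑ k ∈ range K, f (k + 1) := by
  rw [range_eq_Ico, sum_Ico_add' f 0 K 1, zero_add, Finset.Ico_add_one_right_eq_Icc]

noncomputable def expMaxPrimitive (K : ℕ) (q β a s : ℝ) : ℝ :=
  ∑ k ∈ range K, (1 - q * exp (-(β * (s - a)))) ^ (k + 1) / ((k + 1) * β)

theorem hasDerivAt_expMaxPrimitive (K : ℕ) (q a : ℝ) {β : ℝ} (hβ : β ≠ 0) (s : ℝ) :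
    HasDerivAt (expMaxPrimitive K q β a) (1 - (1 - q * exp (-(β * (s - a)))) ^ K) s := by
  set p := q * exp (-(β * (s - a)))
  have hp : HasDerivAt (fun s => 1 - q * exp (-(β * (s - a)))) (β * p) s :=
    ((((hasDerivAt_id' s).sub_const a).const_mul β).fun_neg.exp.const_mul q).const_sub 1
      |>.congr_deriv (by ring)
  have hterm (k : ℕ) : HasDerivAt
      (fun s => (1 - q * exp (-(β * (s - a)))) ^ (k + 1) / ((k + 1) * β)) ((1 - p) ^ k * p) s :=
    ((hp.fun_pow (k + 1)).div_const ((k + 1) * β)).congr_deriv (by field_simp; push_cast; ring)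
  refine (HasDerivAt.fun_sum (u := range K) fun k _ => hterm k).congr_deriv ?_
  simpa [← Finset.sum_mul] using geom_sum_mul_neg (1 - p) K

theorem intervalIntegral_one_sub_one_sub_exp_pow (K : ℕ) {β : ℝ} (hβ : β ≠ 0) (a b : ℝ) :
    ∫ s in a..b, 1 - (1 - exp (-(β * (s - a)))) ^ K
      = ∑ k ∈ range K, (1 - exp (-(β * (b - a)))) ^ (k + 1) / ((k + 1) * β) := by
  have hderiv (s : ℝ) :
      HasDerivAt (expMaxPrimitive K 1 β a) (1 - (1 - exp (-(β * (s - a)))) ^ K) s := by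
    simpa using hasDerivAt_expMaxPrimitive K 1 a hβ s
  rw [intervalIntegral.integral_eq_sub_of_hasDerivAt (fun s _ => hderiv s)
    (by apply Continuous.intervalIntegrable; fun_prop)]
  simp [expMaxPrimitive]

theorem one_sub_one_sub_mul_exp_pow_nonneg (K : ℕ) {q β a s : ℝ} (hq₀ : 0 ≤ q) (hq₁ : q ≤ 1)
    (hβ : 0 ≤ β) (hs : a ≤ s) : 0 ≤ 1 - (1 - q * exp (-(β * (s - a)))) ^ K := by
  have he : exp (-(β * (s - a))) ≤ 1 :=
    exp_le_one_iff.2 (neg_nonpos.2 (mul_nonneg hβ (sub_nonneg.2 hs)))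
  have hp₀ : 0 ≤ q * exp (-(β * (s - a))) := mul_nonneg hq₀ (exp_pos _).le
  have hp₁ : q * exp (-(β * (s - a))) ≤ 1 := mul_le_one₀ hq₁ (exp_pos _).le he
  exact sub_nonneg.2 (pow_le_one₀ (by linarith) (by linarith))

theorem tendsto_expMaxPrimitive_atTop (K : ℕ) (q a : ℝ) {β : ℝ} (hβ : 0 < β) :
    Tendsto (expMaxPrimitive K q β a) atTop (𝓝 (∑ k ∈ range K, 1 / ((k + 1) * β))) := by
  have hexp : Tendsto (fun s => exp (-(β * (s - a)))) atTop (𝓝 0) :=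
    tendsto_exp_atBot.comp <| tendsto_neg_atTop_atBot.comp <|
      (tendsto_atTop_add_const_right _ (-a) tendsto_id).const_mul_atTop hβ
  refine tendsto_finsetSum _ fun k _ => ?_
  simpa using (((hexp.const_mul q).const_sub 1).pow (k + 1)).div_const ((k + 1) * β)

theorem integrableOn_Ioi_one_sub_one_sub_mul_exp_pow (K : ℕ) {q β : ℝ} (hq₀ : 0 ≤ q)
    (hq₁ : q ≤ 1) (hβ : 0 < β) (a : ℝ) :
    IntegrableOn (fun s => 1 - (1 - q * exp (-(β * (s - a)))) ^ K) (Ioi a) :=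
  integrableOn_Ioi_deriv_of_nonneg' (fun s _ => hasDerivAt_expMaxPrimitive K q a hβ.ne' s)
    (fun _ hs => one_sub_one_sub_mul_exp_pow_nonneg K hq₀ hq₁ hβ.le (le_of_lt hs))
    (tendsto_expMaxPrimitive_atTop K q a hβ)

theorem integral_Ioi_one_sub_one_sub_mul_exp_pow (K : ℕ) {q β : ℝ} (hq₀ : 0 ≤ q)
    (hq₁ : q ≤ 1) (hβ : 0 < β) (a : ℝ) :
    ∫ s in Ioi a, 1 - (1 - q * exp (-(β * (s - a)))) ^ K
      = ∑ k ∈ range K, (1 - (1 - q) ^ (k + 1)) / ((k + 1) * β) := by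
  rw [integral_Ioi_of_hasDerivAt_of_nonneg'
    (fun s _ => hasDerivAt_expMaxPrimitive K q a hβ.ne' s)
    (fun _ hs => one_sub_one_sub_mul_exp_pow_nonneg K hq₀ hq₁ hβ.le (le_of_lt hs))
    (tendsto_expMaxPrimitive_atTop K q a hβ), expMaxPrimitive, ← sum_sub_distrib]
  simp [sub_div]

/-- `P(S₁ > s)`. -/
noncomputable def forkSurvival (c μ t1 : ℝ) (n0 N : ℕ) (s : ℝ) : ℝ :=
  if s < c then 1
  else if s < t1 + c then Real.exp (-(μ * (n0 : ℝ) * (s - c)))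
  else Real.exp (-(μ * (N : ℝ) * (s - t1 - c)) - μ * (n0 : ℝ) * t1)

section forkSurvival

variable {c μ t1 s : ℝ} {n0 N : ℕ}

theorem forkSurvival_eq_one_of_le (ht1 : 0 < t1) (hs : s ≤ c) :
    forkSurvival c μ t1 n0 N s = 1 := by
  rcases hs.lt_or_eq with hs | rfl
  · simp [forkSurvival, hs]
  · simp [forkSurvival, ht1]

theorem forkSurvival_eq_of_mem_Icc (hs : s ∈ Icc c (t1 + c)) :
    forkSurvival c μ t1 n0 N s = exp (-(μ * n0 * (s - c))) := by
  rcases hs.2.lt_or_eq with hs' | rfl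
  · simp [forkSurvival, hs', hs.1.not_gt]
  · simp [forkSurvival, hs.1.not_gt]

theorem forkSurvival_eq_of_add_le (ht1 : 0 ≤ t1) (hs : t1 + c ≤ s) :
    forkSurvival c μ t1 n0 N s = exp (-(μ * n0 * t1)) * exp (-(μ * N * (s - (t1 + c)))) := by
  simp only [forkSurvival, (by linarith : ¬ s < c), hs.not_gt, if_false, ← exp_add]
  ring_nf

end forkSurvival

theorem integral_Ioi_one_sub_one_sub_forkSurvival_pow {K : ℕ} (hK : K ≠ 0) {n0 N : ℕ}
    {c μ t1 : ℝ} (hc : 0 < c) (hμn0 : 0 < μ * n0) (hμN : 0 < μ * N) (ht1 : 0 < t1) :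
    ∫ s in Ioi 0, 1 - (1 - forkSurvival c μ t1 n0 N s) ^ K
      = c + ∑ k ∈ range K, (1 - exp (-(μ * n0 * t1))) ^ (k + 1) / ((k + 1) * (μ * n0))
        + ∑ k ∈ range K, (1 - (1 - exp (-(μ * n0 * t1))) ^ (k + 1)) / ((k + 1) * (μ * N)) := by
  set q := exp (-(μ * n0 * t1))
  set f := fun s => 1 - (1 - forkSurvival c μ t1 n0 N s) ^ K
  have h₁ : EqOn f (fun _ => 1) (uIcc 0 c) := fun s hs => by
    simp [f, forkSurvival_eq_one_of_le ht1 (uIcc_of_le hc.le ▸ hs).2, hK]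
  have h₂ : EqOn f (fun s => 1 - (1 - exp (-(μ * n0 * (s - c)))) ^ K) (uIcc c (t1 + c)) :=
    fun s hs => by
      simp [f, forkSurvival_eq_of_mem_Icc (uIcc_of_le (by linarith : c ≤ t1 + c) ▸ hs)]
  have h₃ : EqOn f (fun s => 1 - (1 - q * exp (-(μ * N * (s - (t1 + c))))) ^ K)
      (Ioi (t1 + c)) := fun s hs => by simp [f, q, forkSurvival_eq_of_add_le ht1.le (le_of_lt hs)]
  have hq₁ : q ≤ 1 := exp_le_one_iff.2 (neg_nonpos.2 (by positivity))
  have i₁ : IntervalIntegrable f volume 0 c :=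
    (intervalIntegrable_congr (h₁.mono uIoc_subset_uIcc)).2 intervalIntegrable_const
  have i₂ : IntervalIntegrable f volume c (t1 + c) :=
    (intervalIntegrable_congr (h₂.mono uIoc_subset_uIcc)).2 (by
      apply Continuous.intervalIntegrable; fun_prop)
  have i₃ : IntegrableOn f (Ioi (t1 + c)) :=
    (integrableOn_Ioi_one_sub_one_sub_mul_exp_pow K (exp_pos _).le hq₁ hμN _).congr_fun
      h₃.symm measurableSet_Ioi
  rw [← intervalIntegral.integral_interval_add_Ioi' (i₁.trans i₂) i₃,
    ← intervalIntegral.integral_add_adjacent_intervals i₁ i₂,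
    intervalIntegral.integral_congr h₁, intervalIntegral.integral_congr h₂,
    setIntegral_congr_fun measurableSet_Ioi h₃,
    intervalIntegral_one_sub_one_sub_exp_pow K hμn0.ne',
    integral_Ioi_one_sub_one_sub_mul_exp_pow K (exp_pos _).le hq₁ hμN]
  simp [q]

/-- Single forking of `K` tasks with shifted exponential service (shift `c`, rate `μ`):
batches `(n₀, N - n₀)` at times `(0, t₁)`, `t₁ > 0`. With `α = cμN`, `x = n₀/N`, `u = t₁/c`,
the mean makespan satisfies
`E S / c = 1 + (1/α) ∑_{k=1}^K (1/k) (1 + ((1-x)/x)(1 - e^{-αxu})^k)`. -/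
theorem mean_makespan_single_fork (K N n0 : ℕ) (hK : 1 ≤ K) (hn0 : 1 ≤ n0) (hn0N : n0 ≤ N)
    (c μ t1 α x u : ℝ) (hc : 0 < c) (hμ : 0 < μ) (ht1 : 0 < t1)
    (hα : α = c * μ * N) (hx : x = (n0 : ℝ) / N) (hu : u = t1 / c) :
    (∫ s in Set.Ioi (0 : ℝ),
        (1 - (1 - (if s < c then 1
          else if s < t1 + c then Real.exp (-(μ * (n0 : ℝ) * (s - c)))
          else Real.exp (-(μ * (N : ℝ) * (s - t1 - c)) - μ * (n0 : ℝ) * t1))) ^ K)) / c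
      = 1 + (1 / α) * ∑ k ∈ Finset.Icc 1 K, (1 / (k : ℝ)) *
          (1 + ((1 - x) / x) * (1 - Real.exp (-(α * x * u))) ^ k) := by
  have hn0' : (0 : ℝ) < n0 := by exact_mod_cast hn0
  have hN : (0 : ℝ) < N := by exact_mod_cast hn0.trans hn0N
  have hαxu : α * x * u = μ * n0 * t1 := by rw [hα, hx, hu]; field_simp
  change (∫ s in Ioi 0, 1 - (1 - forkSurvival c μ t1 n0 N s) ^ K) / c = _
  rw [integral_Ioi_one_sub_one_sub_forkSurvival_pow (by omega) hc (by positivity)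
    (by positivity) ht1, hαxu, sum_Icc_one_eq_sum_range, add_assoc, add_div, div_self hc.ne',
    ← sum_add_distrib, sum_div, mul_sum, hα, hx]
  congr 1
  refine sum_congr rfl fun k _ => ?_
  push_cast
  field_simp
  ring
end

section
/- Define W(x,u) for x ∈ (0,1], u > 0, α > 0 by (μ/λ)W = 1 + α + α(1-x)((1 - e^{-αxu})/(αx) - u) for u ≤ 1 and (μ/λ)W = 1 + α + α(1-x)((e^{-αx(u-1)} - e^{-αxu})/(αx) - 1) for u ≥ 1. Then for each fixed u > 0, W is strictly convex in x on (0,1], i.e. ∂²W/∂x² > 0. -/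
/-!
Both branches of `W` are, up to an affine function of `x`, a positive multiple of
`F β x - F γ x` with `F β x = (1/x - 1)(1 - e^{-βx})` (`forkTerm`) and `0 ≤ γ < β`: take `(β, γ) = (αu, 0)` for
`u ≤ 1` and `(αu, α(u-1))` for `u > 1`. One computes
`x³ F''(β, x) = 2 - (2 + 2t + (1-x) t²) e^{-t}` with `t = βx`, and `e^d ≥ 1 + d + d²/2` shows that
`t ↦ (2 + 2t + a t²) e^{-t}` is strictly decreasing on `t ≥ 0` for `0 ≤ a < 1`. Hence `F''` is
strictly increasing in `β`, so `F β - F γ` has positive second derivative on `(0, 1)`.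
-/

open Real Set

theorem strictConvexOn_of_hasDerivAt2_pos {D : Set ℝ} (hD : Convex ℝ D) {f f' f'' : ℝ → ℝ}
    (hf : ContinuousOn f D) (hf' : ∀ x ∈ interior D, HasDerivAt f (f' x) x)
    (hf'' : ∀ x ∈ interior D, HasDerivAt f' (f'' x) x)
    (hf''₀ : ∀ x ∈ interior D, 0 < f'' x) : StrictConvexOn ℝ D f := by
  have hderiv : (interior D).EqOn f' (deriv f) := fun x hx => (hf' x hx).deriv.symm
  refine StrictMonoOn.strictConvexOn_of_deriv hD hf (StrictMonoOn.congr ?_ hderiv)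
  refine strictMonoOn_of_hasDerivWithinAt_pos (f' := f'') hD.interior
    (fun x hx => (hf'' x hx).continuousAt.continuousWithinAt) (fun x hx => ?_) (fun x hx => ?_)
  all_goals rw [interior_interior] at hx
  · exact (hf'' x hx).hasDerivWithinAt
  · exact hf''₀ x hx

theorem strictAntiOn_quadratic_mul_exp_neg {a : ℝ} (ha₀ : 0 ≤ a) (ha₁ : a < 1) :
    StrictAntiOn (fun t => (2 + 2 * t + a * t ^ 2) * exp (-t)) (Ici 0) := by
  intro s hs t _ hst
  simp only [mem_Ici] at hs
  have hexp : exp (-s) = exp (-t) * exp (t - s) := by rw [← exp_add]; ring_nf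
  have hquad : 2 + 2 * t + a * t ^ 2 < (2 + 2 * s + a * s ^ 2) * (1 + (t - s) + (t - s) ^ 2 / 2) := by
    nlinarith [mul_pos (sub_pos.2 ha₁) (pow_pos (sub_pos.2 hst) 2),
      mul_nonneg (mul_nonneg ha₀ (sq_nonneg s)) (sub_pos.2 hst).le,
      mul_nonneg (mul_nonneg ha₀ (sq_nonneg s)) (sq_nonneg (t - s)),
      mul_nonneg (mul_nonneg hs (sub_pos.2 ha₁).le) (sub_pos.2 hst).le,
      mul_nonneg hs (sq_nonneg (t - s))]
  calc (2 + 2 * t + a * t ^ 2) * exp (-t)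
      < (2 + 2 * s + a * s ^ 2) * (1 + (t - s) + (t - s) ^ 2 / 2) * exp (-t) := by gcongr
    _ ≤ (2 + 2 * s + a * s ^ 2) * exp (t - s) * exp (-t) := by
        gcongr
        exact quadratic_le_exp_of_nonneg (sub_pos.2 hst).le
    _ = (2 + 2 * s + a * s ^ 2) * exp (-s) := by rw [hexp]; ring

noncomputable def forkTerm (β x : ℝ) : ℝ := (x⁻¹ - 1) * (1 - exp (-(β * x)))

noncomputable def forkTermDeriv (β x : ℝ) : ℝ :=
  ((1 - x) * (β * x) * exp (-(β * x)) - (1 - exp (-(β * x)))) / x ^ 2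

noncomputable def forkTermDeriv2 (β x : ℝ) : ℝ :=
  (2 - (2 + 2 * (β * x) + (1 - x) * (β * x) ^ 2) * exp (-(β * x))) / x ^ 3

theorem hasDerivAt_exp_neg_mul (β x : ℝ) :
    HasDerivAt (fun y => exp (-(β * y))) (-β * exp (-(β * x))) x := by
  simpa [mul_comm] using ((hasDerivAt_id x).const_mul β).neg.exp

theorem hasDerivAt_forkTerm (β : ℝ) {x : ℝ} (hx : x ≠ 0) :
    HasDerivAt (forkTerm β) (forkTermDeriv β x) x := by
  refine (((hasDerivAt_inv hx).sub_const 1).fun_mul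
    ((hasDerivAt_exp_neg_mul β x).const_sub 1)).congr_deriv ?_
  simp only [forkTermDeriv]
  field_simp
  ring

theorem hasDerivAt_forkTermDeriv (β : ℝ) {x : ℝ} (hx : x ≠ 0) :
    HasDerivAt (forkTermDeriv β) (forkTermDeriv2 β x) x := by
  have hE := hasDerivAt_exp_neg_mul β x
  have hnum := ((((hasDerivAt_id' x).const_sub 1).fun_mul ((hasDerivAt_id' x).const_mul β)).fun_mul
    hE).fun_sub (hE.const_sub 1)
  refine (hnum.fun_div (hasDerivAt_pow 2 x) (pow_ne_zero 2 hx)).congr_deriv ?_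
  simp only [forkTermDeriv2]
  field_simp
  ring

theorem forkTermDeriv2_lt_forkTermDeriv2 {β γ x : ℝ} (hγ : 0 ≤ γ) (hγβ : γ < β) (hx₀ : 0 < x)
    (hx₁ : x < 1) : forkTermDeriv2 γ x < forkTermDeriv2 β x := by
  have hanti := strictAntiOn_quadratic_mul_exp_neg (sub_nonneg.2 hx₁.le) (sub_lt_self 1 hx₀)
    (mem_Ici.2 (mul_nonneg hγ hx₀.le)) (mem_Ici.2 (mul_nonneg (hγ.trans hγβ.le) hx₀.le))
    (mul_lt_mul_of_pos_right hγβ hx₀)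
  unfold forkTermDeriv2
  gcongr

theorem strictConvexOn_affine_add_forkTerm_sub (A B : ℝ) {c β γ : ℝ} (hc : 0 < c) (hγ : 0 ≤ γ)
    (hγβ : γ < β) :
    StrictConvexOn ℝ (Ioc 0 1) (fun x => A + B * x + c * (forkTerm β x - forkTerm γ x)) := by
  have hf' (x : ℝ) (hx : 0 < x) : HasDerivAt (fun x => A + B * x + c * (forkTerm β x - forkTerm γ x))
      (B + c * (forkTermDeriv β x - forkTermDeriv γ x)) x := by
    simpa using (((hasDerivAt_id x).const_mul B).const_add A).fun_add
      (((hasDerivAt_forkTerm β hx.ne').fun_sub (hasDerivAt_forkTerm γ hx.ne')).const_mul c)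
  refine strictConvexOn_of_hasDerivAt2_pos (convex_Ioc 0 1)
    (fun x hx => (hf' x hx.1).continuousAt.continuousWithinAt) (fun x hx => ?_) (fun x hx => ?_)
    (fun x hx => ?_) (f' := fun x => B + c * (forkTermDeriv β x - forkTermDeriv γ x))
    (f'' := fun x => c * (forkTermDeriv2 β x - forkTermDeriv2 γ x))
  all_goals rw [interior_Ioc] at hx
  · exact hf' x hx.1
  · simpa using (((hasDerivAt_forkTermDeriv β hx.1.ne').sub
      (hasDerivAt_forkTermDeriv γ hx.1.ne')).const_mul c).const_add B
  · exact mul_pos hc (sub_pos.2 (forkTermDeriv2_lt_forkTermDeriv2 hγ hγβ hx.1 hx.2))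

/-- The single-fork mean server utilization cost
`(μ/λ) W(x,u) = 1 + α + α(1-x)((1 - e^{-αxu})/(αx) - u)` for `u ≤ 1`, and
`(μ/λ) W(x,u) = 1 + α + α(1-x)((e^{-αx(u-1)} - e^{-αxu})/(αx) - 1)` for `u ≥ 1`,
is, for each fixed `u > 0`, strictly convex in the initial server fraction `x` on `(0,1]`. -/
theorem utilization_strictConvex (lam μ α : ℝ) (hlam : 0 < lam) (hμ : 0 < μ) (hα : 0 < α)
    (u : ℝ) (hu : 0 < u) :
    StrictConvexOn ℝ (Set.Ioc (0 : ℝ) 1)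
      (fun x => (lam / μ) * (1 + α + α * (1 - x) *
        (if u ≤ 1 then (1 - Real.exp (-(α * x * u))) / (α * x) - u
          else (Real.exp (-(α * x * (u - 1))) - Real.exp (-(α * x * u))) / (α * x) - 1))) := by
  have hc : 0 < lam / μ := div_pos hlam hμ
  by_cases hu₁ : u ≤ 1
  · refine (strictConvexOn_affine_add_forkTerm_sub (lam / μ * (1 + α - α * u)) (lam / μ * α * u)
      hc le_rfl (by positivity : 0 < α * u)).congr fun x hx => ?_
    have hx₀ : x ≠ 0 := hx.1.ne'
    simp only [if_pos hu₁, forkTerm, mul_right_comm α u x, zero_mul, neg_zero, exp_zero]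
    field_simp
    ring
  · refine (strictConvexOn_affine_add_forkTerm_sub (lam / μ) (lam / μ * α) hc
      (mul_nonneg hα.le (by linarith)) (mul_lt_mul_of_pos_left (sub_lt_self u one_pos) hα)).congr fun x hx => ?_
    have hx₀ : x ≠ 0 := hx.1.ne'
    simp only [if_neg hu₁, forkTerm, mul_right_comm α u x, mul_right_comm α (u - 1) x]
    field_simp
    ring
end

section
/- For fixed α > 0, x ∈ (0,1), u > 0, and integer K ≥ 1, define h(K) = -∑_{k=1}^{K} (1-e^{-αxu})^k/(kαx²) + (u/x)(1 - (1-e^{-αxu})^K). Then h(K) ≤ 0 for all K ≥ 1; in particular lim_{K→∞} h(K) = 0 and h(1) < 0, so the mean makespan E[S] of K tasks under single forking is nonincreasing in the initial server fraction x. -/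
open Real Filter Finset


/-- For fixed `α > 0`, `x ∈ (0,1)`, `u > 0` and integer `K ≥ 1`, define
`h K = -∑_{k=1}^K (1-e^{-αxu})^k/(k α x²) + (u/x)(1 - (1-e^{-αxu})^K)`.
Then `h K ≤ 0` for all `K ≥ 1`; in particular `h K → 0` as `K → ∞` and `h 1 < 0`
(so the mean makespan under single forking is nonincreasing in the initial fraction `x`). -/
theorem single_fork_makespan_decreasing_aux (α x u : ℝ) (hα : 0 < α)
    (hx0 : 0 < x) (hx1 : x < 1) (hu : 0 < u) :
    let h : ℕ → ℝ := fun K =>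
      -∑ k ∈ Finset.Icc 1 K, (1 - Real.exp (-(α * x * u))) ^ k / ((k : ℝ) * α * x ^ 2)
        + (u / x) * (1 - (1 - Real.exp (-(α * x * u))) ^ K)
    (∀ K, 1 ≤ K → h K ≤ 0)
    ∧ Filter.Tendsto h Filter.atTop (nhds 0)
    ∧ h 1 < 0 := by
  intro h
  set t : ℝ := α * x * u with ht
  have ht0 : 0 < t := by positivity
  set β : ℝ := 1 - Real.exp (-t) with hβdef
  have hexp : Real.exp (-t) < 1 := Real.exp_lt_one_iff.mpr (by linarith)
  have hβ0 : 0 < β := by simp [hβdef]; linarith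
  have hβ1 : β < 1 := by have := Real.exp_pos (-t); simp [hβdef]; linarith
  set f : ℕ → ℝ := fun n => β ^ (n + 1) / (n + 1) with hf
  have hS : HasSum f t := by
    have := hasSum_pow_div_log_of_abs_lt_one (x := β) (by rw [abs_of_pos hβ0]; exact hβ1)
    have h1β : (1 : ℝ) - β = Real.exp (-t) := by simp [hβdef]
    rwa [h1β, Real.log_exp, neg_neg] at this
  have hSum : Summable f := hS.summable
  have hax2 : (0:ℝ) < α * x ^ 2 := by positivity
  -- rewrite h
  have hicc : ∀ K : ℕ, ∑ k ∈ Finset.Icc 1 K, β ^ k / ((k : ℝ) * α * x ^ 2)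
      = (∑ i ∈ Finset.range K, f i) / (α * x ^ 2) := by
    intro K
    rw [Finset.sum_div]
    rw [show Finset.Icc 1 K = Finset.Ico 1 (K + 1) by rw [Finset.Ico_add_one_right_eq_Icc]]
    rw [Finset.sum_Ico_eq_sum_range]
    simp only [Nat.add_sub_cancel]
    refine Finset.sum_congr rfl fun i _ => ?_
    simp only [hf]
    push_cast
    rw [add_comm 1 (i:ℝ), add_comm 1 i]
    rw [div_div]
    ring_nf
  have hux : u / x = t / (α * x ^ 2) := by
    field_simp [ht]
    ring
  have hrw : ∀ K : ℕ, h K = ((t - ∑ i ∈ Finset.range K, f i) - t * β ^ K) / (α * x ^ 2) := by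
    intro K
    show -∑ k ∈ Finset.Icc 1 K, β ^ k / ((k : ℝ) * α * x ^ 2) + (u / x) * (1 - β ^ K) = _
    rw [hicc, hux]
    field_simp
    ring
  have htail : ∀ K : ℕ, t - ∑ i ∈ Finset.range K, f i = ∑' n, f (n + K) := by
    intro K
    have := Summable.sum_add_tsum_nat_add K hSum
    rw [hS.tsum_eq] at this
    linarith
  have key : ∀ K : ℕ, (∑' n, f (n + K)) ≤ t * β ^ K := by
    intro K
    have hmul : HasSum (fun n => β ^ K * f n) (β ^ K * t) := hS.mul_left _
    have hle : ∀ n : ℕ, f (n + K) ≤ β ^ K * f n := by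
      intro n
      simp only [hf]
      have h1 : β ^ K * (β ^ (n + 1) / (n + 1)) = β ^ (n + K + 1) / (n + 1) := by
        rw [pow_add, pow_add, pow_add]; ring
      rw [h1]
      have hnum : (0:ℝ) ≤ β ^ (n + K + 1) := by positivity
      push_cast
      apply div_le_div_of_nonneg_left hnum (by positivity)
      push_cast; linarith
    calc (∑' n, f (n + K)) ≤ ∑' n, β ^ K * f n := by
          apply Summable.tsum_le_tsum hle ((summable_nat_add_iff K).mpr hSum) hmul.summable
      _ = β ^ K * t := hmul.tsum_eq
      _ = t * β ^ K := by ring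
  refine ⟨fun K _ => ?_, ?_, ?_⟩
  · rw [hrw, htail]
    apply div_nonpos_of_nonpos_of_nonneg _ (le_of_lt hax2)
    have := key K
    linarith
  · have h1 : Tendsto (fun K => ∑ i ∈ Finset.range K, f i) atTop (nhds t) :=
      hS.tendsto_sum_nat
    have h2 : Tendsto (fun K : ℕ => β ^ K) atTop (nhds 0) :=
      tendsto_pow_atTop_nhds_zero_of_lt_one (le_of_lt hβ0) hβ1
    have h3 : Tendsto (fun K => ((t - ∑ i ∈ Finset.range K, f i) - t * β ^ K) / (α * x ^ 2))
        atTop (nhds (((t - t) - t * 0) / (α * x ^ 2))) := by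
      exact (((tendsto_const_nhds.sub h1).sub (tendsto_const_nhds.mul h2)).div_const _)
    simp only [sub_self, mul_zero, sub_zero, zero_div] at h3
    have heq : h = fun K => ((t - ∑ i ∈ Finset.range K, f i) - t * β ^ K) / (α * x ^ 2) :=
      funext hrw
    rw [heq]
    exact h3
  · rw [hrw]
    apply div_neg_of_neg_of_pos _ hax2
    have hsum1 : ∑ i ∈ Finset.range 1, f i = β := by simp [hf]
    rw [hsum1, pow_one]
    -- need t - β - t*β < 0 i.e. t(1-β) < β i.e. t exp(-t) < 1 - exp(-t)
    have : t + 1 < Real.exp t := Real.add_one_lt_exp (ne_of_gt ht0)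
    have hE : Real.exp (-t) = 1 / Real.exp t := by rw [Real.exp_neg]; ring
    have hEpos : 0 < Real.exp t := Real.exp_pos t
    have : (t + 1) * Real.exp (-t) < 1 := by
      rw [hE]
      rw [mul_one_div, div_lt_one hEpos]
      exact this
    simp only [hβdef]
    nlinarith [Real.exp_pos (-t)]
end
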